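/- arXiv:1201.1118 — 5 statements merged into one kernel-verified Lean document; each statement's English description precedes it below -/
import Mathlib

section
/- Let X be a real-valued stochastic process with stationary independent increments (a Lévy process), f : [0,∞) → ℝ measurable, and 0 ≤ a < b < c. Then P(X(t) ≤ f(t) for all t ∈ [a,c]) ≥ P(X(t) ≤ f(t) for all t ∈ [a,b]) · P(X(t) ≤ f(t) for all t ∈ [b,c]). -/
/-!
The events `{X ≤ f on S}` are decreasing functions of the independent increments of `X`, so by
Harris' inequality (proved by induction on the number of coordinates from Chebyshev's
integral inequality) they are positively correlated when `S` is finite; continuity of measure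
extends this to countable `S`. Finally, for an arbitrary `f` there is a countable set `D` such
that whenever `t ∉ D` and `f t < y`, points `s ∈ D` with `f s < y` accumulate at `t` from the
right; hence a right-continuous path lies below `f` on `[u, v]` as soon as it does on
`D ∩ [u, v]` (for `v ∈ D`).
-/

open MeasureTheory ProbabilityTheory Set Filter Topology
open scoped ENNReal NNReal

theorem ENNReal.mul_add_mul_le_mul_add_mul {a b c d : ℝ≥0∞} (hab : a ≤ b) (hcd : c ≤ d) :
    a * d + b * c ≤ a * c + b * d := by
  obtain ⟨e, rfl⟩ := exists_add_of_le hcd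
  calc a * (c + e) + b * c = a * c + b * c + a * e := by ring
    _ ≤ a * c + b * c + b * e := by gcongr
    _ = a * c + b * (c + e) := by ring

theorem lintegral_mul_lintegral_le_lintegral_mul_of_antitone {α : Type*} [MeasurableSpace α]
    [LinearOrder α] (ν : Measure α) [IsProbabilityMeasure ν] {φ ψ : α → ℝ≥0∞}
    (hφ : Measurable φ) (hψ : Measurable ψ) (hφa : Antitone φ) (hψa : Antitone ψ) :
    (∫⁻ x, φ x ∂ν) * ∫⁻ x, ψ x ∂ν ≤ ∫⁻ x, φ x * ψ x ∂ν := by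
  have key (x y : α) : φ x * ψ y + φ y * ψ x ≤ φ x * ψ x + φ y * ψ y := by
    rcases le_total x y with h | h
    · simpa [add_comm, mul_comm] using ENNReal.mul_add_mul_le_mul_add_mul (hφa h) (hψa h)
    · simpa [add_comm, mul_comm] using ENNReal.mul_add_mul_le_mul_add_mul (hφa h) (hψa h)
  suffices 2 * ((∫⁻ x, φ x ∂ν) * ∫⁻ x, ψ x ∂ν) ≤ 2 * ∫⁻ x, φ x * ψ x ∂ν from
    (ENNReal.mul_le_mul_iff_right two_ne_zero ENNReal.ofNat_ne_top).mp this
  have hφψ : Measurable fun y => φ y * ψ y := hφ.mul hψ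
  calc 2 * ((∫⁻ x, φ x ∂ν) * ∫⁻ x, ψ x ∂ν)
      = ∫⁻ x, ∫⁻ y, (φ x * ψ y + φ y * ψ x) ∂ν ∂ν := by
        simp only [lintegral_add_left (hψ.const_mul _), lintegral_const_mul _ hψ,
          lintegral_mul_const _ hφ, lintegral_add_left (hφ.mul_const _)]
        ring
    _ ≤ ∫⁻ x, ∫⁻ y, (φ x * ψ x + φ y * ψ y) ∂ν ∂ν :=
        lintegral_mono fun x => lintegral_mono fun y => key x y
    _ = 2 * ∫⁻ x, φ x * ψ x ∂ν := by
        simp only [lintegral_add_right _ hφψ, lintegral_const, measure_univ, mul_one,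
          lintegral_add_left hφψ]
        ring

theorem lintegral_pi_fin_succ {α : Type*} [MeasurableSpace α] {n : ℕ}
    (ν : Fin (n + 1) → Measure α) [∀ i, SigmaFinite (ν i)] {F : (Fin (n + 1) → α) → ℝ≥0∞}
    (hF : Measurable F) :
    ∫⁻ x, F x ∂Measure.pi ν =
      ∫⁻ x, ∫⁻ y, F (Fin.cons x y) ∂Measure.pi (fun j => ν j.succ) ∂ν 0 := by
  set e := MeasurableEquiv.piFinSuccAbove (fun _ => α) 0
  rw [← ((measurePreserving_piFinSuccAbove ν 0).symm e).lintegral_comp hF,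
    lintegral_prod (fun p => F (e.symm p)) (hF.comp e.symm.measurable).aemeasurable]
  simp [e, MeasurableEquiv.piFinSuccAbove_symm_apply]
  rfl

theorem lintegral_pi_mul_lintegral_pi_le_of_antitone {α : Type*} [MeasurableSpace α]
    [LinearOrder α] {n : ℕ} (ν : Fin n → Measure α) [∀ i, IsProbabilityMeasure (ν i)]
    {F G : (Fin n → α) → ℝ≥0∞} (hF : Measurable F) (hG : Measurable G)
    (hFa : Antitone F) (hGa : Antitone G) :
    (∫⁻ x, F x ∂Measure.pi ν) * ∫⁻ x, G x ∂Measure.pi ν ≤ ∫⁻ x, F x * G x ∂Measure.pi ν := by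
  induction n with
  | zero => simp [lintegral_unique]
  | succ n ih =>
    have hcons_meas :
        Measurable fun p : α × (Fin n → α) => (Fin.cons p.1 p.2 : Fin (n + 1) → α) :=
      measurable_pi_iff.mpr fun i => by cases i using Fin.cases <;> simp <;> fun_prop
    have hcons_mono (x : α) : Monotone fun y : Fin n → α => (Fin.cons x y : Fin (n + 1) → α) :=
      fun y y' h => Fin.cons_le_cons.mpr ⟨le_rfl, h⟩
    have hsection {H : (Fin (n + 1) → α) → ℝ≥0∞} (hH : Antitone H) :
        Antitone fun x => ∫⁻ y, H (Fin.cons x y) ∂Measure.pi (fun j => ν j.succ) :=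
      fun x x' h => lintegral_mono fun y => hH (Fin.cons_le_cons.mpr ⟨h, le_rfl⟩)
    rw [lintegral_pi_fin_succ ν hF, lintegral_pi_fin_succ ν hG,
      lintegral_pi_fin_succ ν (F := fun x => F x * G x) (hF.mul hG)]
    exact (lintegral_mul_lintegral_le_lintegral_mul_of_antitone (ν 0)
      (hF.comp hcons_meas).lintegral_prod_right' (hG.comp hcons_meas).lintegral_prod_right'
      (hsection hFa) (hsection hGa)).trans
      (lintegral_mono fun x => ih _ (hF.comp (hcons_meas.comp measurable_prodMk_left))
        (hG.comp (hcons_meas.comp measurable_prodMk_left)) (hFa.comp_monotone (hcons_mono x))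
        (hGa.comp_monotone (hcons_mono x)))

theorem measure_pi_mul_le_of_isLowerSet {α : Type*} [MeasurableSpace α] [LinearOrder α]
    {n : ℕ} (ν : Fin n → Measure α) [∀ i, IsProbabilityMeasure (ν i)]
    {S T : Set (Fin n → α)} (hS : MeasurableSet S) (hT : MeasurableSet T)
    (hSl : IsLowerSet S) (hTl : IsLowerSet T) :
    Measure.pi ν S * Measure.pi ν T ≤ Measure.pi ν (S ∩ T) := by
  have hanti {U : Set (Fin n → α)} (hU : IsLowerSet U) :
      Antitone (U.indicator (1 : (Fin n → α) → ℝ≥0∞)) := fun x y h => by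
    by_cases hy : y ∈ U
    · simp [hy, hU h hy]
    · simp [hy]
  have := lintegral_pi_mul_lintegral_pi_le_of_antitone ν (measurable_one.indicator hS)
    (measurable_one.indicator hT) (hanti hSl) (hanti hTl)
  rwa [lintegral_indicator_one hS, lintegral_indicator_one hT, ← Pi.mul_def,
    ← inter_indicator_one, lintegral_indicator_one (hS.inter hT)] at this

theorem ProbabilityTheory.iIndepFun.measure_preimage_mul_le_of_isLowerSet {Ω α : Type*}
    [MeasurableSpace Ω] {μ : Measure Ω} [IsProbabilityMeasure μ] [MeasurableSpace α]
    [LinearOrder α] {n : ℕ} {Y : Fin n → Ω → α} (hY : iIndepFun Y μ)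
    (hYm : ∀ i, Measurable (Y i)) {S T : Set (Fin n → α)} (hS : MeasurableSet S)
    (hT : MeasurableSet T) (hSl : IsLowerSet S) (hTl : IsLowerSet T) :
    μ ((fun ω i => Y i ω) ⁻¹' S) * μ ((fun ω i => Y i ω) ⁻¹' T)
      ≤ μ ((fun ω i => Y i ω) ⁻¹' (S ∩ T)) := by
  have hYm' : Measurable fun ω i => Y i ω := measurable_pi_lambda _ hYm
  have (i : Fin n) : IsProbabilityMeasure (μ.map (Y i)) :=
    Measure.isProbabilityMeasure_map (hYm i).aemeasurable
  rw [← Measure.map_apply hYm' hS, ← Measure.map_apply hYm' hT,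
    ← Measure.map_apply hYm' (hS.inter hT),
    (iIndepFun_iff_map_fun_eq_pi_map fun i => (hYm i).aemeasurable).mp hY]
  exact measure_pi_mul_le_of_isLowerSet _ hS hT hSl hTl

theorem Monotone.fin_cons_bot {α : Type*} [Preorder α] [OrderBot α] {n : ℕ} {f : Fin n → α}
    (hf : Monotone f) : Monotone (Fin.cons ⊥ f : Fin (n + 1) → α) := by
  intro i j hij
  cases i using Fin.cases with
  | zero => exact bot_le
  | succ i =>
    cases j using Fin.cases with
    | zero => exact absurd hij (by simp)
    | succ j => exact hf (Fin.succ_le_succ_iff.mp hij)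

def staysBelow {T Ω : Type*} (X : T → Ω → ℝ) (f : T → ℝ) (S : Set T) : Set Ω :=
  {ω | ∀ t ∈ S, X t ω ≤ f t}

section staysBelow

variable {T Ω : Type*} (X : T → Ω → ℝ) (f : T → ℝ)

theorem staysBelow_iUnion {ι : Type*} (S : ι → Set T) :
    staysBelow X f (⋃ i, S i) = ⋂ i, staysBelow X f (S i) := by
  ext ω
  simp only [staysBelow, mem_iUnion, mem_iInter, mem_ofPred_eq]
  grind

theorem staysBelow_anti {S S' : Set T} (h : S ⊆ S') : staysBelow X f S' ⊆ staysBelow X f S :=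
  fun _ hω t ht => hω t (h ht)

variable {X} [MeasurableSpace Ω]

theorem measurableSet_staysBelow (hmeas : ∀ t, Measurable (X t)) {S : Set T}
    (hS : S.Countable) : MeasurableSet (staysBelow X f S) := by
  simp only [staysBelow, ofPred_forall]
  exact MeasurableSet.biInter hS fun t _ => measurableSet_le (hmeas t) measurable_const

end staysBelow

namespace ProbabilityTheory.HasIndepIncrements

variable {T Ω : Type*} [LinearOrder T] [OrderBot T] [MeasurableSpace Ω] {μ : Measure Ω}
  [IsProbabilityMeasure μ] {X : T → Ω → ℝ}

theorem measure_staysBelow_mul_le_of_finite (hX : HasIndepIncrements X μ)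
    (hX0 : ∀ ω, X ⊥ ω = 0) (hmeas : ∀ t, Measurable (X t)) (f : T → ℝ) {S S' : Set T}
    (hS : S.Finite) (hS' : S'.Finite) :
    μ (staysBelow X f S) * μ (staysBelow X f S') ≤ μ (staysBelow X f (S ∪ S')) := by
  set I := (hS.union hS').toFinset
  set e := I.orderEmbOfFin rfl
  set t : Fin (I.card + 1) → T := Fin.cons ⊥ e
  set Y : Fin I.card → Ω → ℝ := fun i ω => X (t i.succ) ω - X (t i.castSucc) ω
  have hYm (i : Fin I.card) : Measurable (Y i) := (hmeas _).sub (hmeas _)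
  set P : (Fin I.card → ℝ) → Fin I.card → ℝ := fun y k => ∑ i ∈ Finset.Iic k, y i
  have hP_mono : Monotone P := fun y y' h k => Finset.sum_le_sum fun i _ => h i
  have hP_meas : Measurable P :=
    measurable_pi_lambda _ fun k => Finset.measurable_sum _ fun i _ => measurable_pi_apply i
  have hPY (ω : Ω) (k : Fin I.card) : P (fun i => Y i ω) k = X (e k) ω := by
    change ∑ i ∈ Finset.Iic k, (X (t i.succ) ω - X (t i.castSucc) ω) = _
    rw [Fin.sum_Iic_sub k fun i => X (t i) ω]
    simp [t, hX0]
  let L (R : Set T) : Set (Fin I.card → ℝ) := P ⁻¹' {z | ∀ k, e k ∈ R → z k ≤ f (e k)}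
  have hL_meas (R : Set T) : MeasurableSet (L R) := hP_meas <| by
    simp only [ofPred_forall]
    exact .iInter fun k => .iInter fun _ =>
      measurableSet_le (measurable_pi_apply k) measurable_const
  have hL_lower (R : Set T) : IsLowerSet (L R) :=
    fun z z' h hz k hk => (hP_mono h k).trans (hz k hk)
  have hL_union (R R' : Set T) : L (R ∪ R') = L R ∩ L R' := by
    ext z
    simp only [L, mem_preimage, mem_ofPred_eq, mem_union, or_imp, forall_and, mem_inter_iff]
  have hpre {R : Set T} (hR : R ⊆ S ∪ S') :
      staysBelow X f R = (fun ω i => Y i ω) ⁻¹' L R := by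
    ext ω
    simp only [staysBelow, L, mem_preimage, mem_ofPred_eq, hPY]
    refine ⟨fun h k hk => h _ hk, fun h s hs => ?_⟩
    obtain ⟨k, rfl⟩ : s ∈ range e := by simpa [e, I] using hR hs
    exact h k hs
  rw [hpre subset_union_left, hpre subset_union_right, hpre subset_rfl, hL_union]
  exact (hX _ t e.monotone.fin_cons_bot).measure_preimage_mul_le_of_isLowerSet hYm
    (hL_meas S) (hL_meas S') (hL_lower S) (hL_lower S')

theorem measure_staysBelow_mul_le_of_countable (hX : HasIndepIncrements X μ)
    (hX0 : ∀ ω, X ⊥ ω = 0) (hmeas : ∀ t, Measurable (X t)) (f : T → ℝ) {S S' : Set T}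
    (hS : S.Countable) (hS' : S'.Countable) :
    μ (staysBelow X f S) * μ (staysBelow X f S') ≤ μ (staysBelow X f (S ∪ S')) := by
  rcases (S ∪ S').eq_empty_or_nonempty with h | h
  · obtain ⟨rfl, rfl⟩ := union_empty_iff.mp h
    simp [staysBelow]
  obtain ⟨e, he⟩ := (hS.union hS').exists_eq_range h
  have hlim {R : Set T} (hR : R ⊆ S ∪ S') (hRc : R.Countable) :
      Tendsto (fun n => μ (staysBelow X f (R ∩ e '' Iio n))) atTop
        (𝓝 (μ (staysBelow X f R))) := by
    have hR_eq : R = ⋃ n, R ∩ e '' Iio n := by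
      rw [← inter_iUnion, ← image_iUnion, iUnion_Iio, image_univ, ← he, inter_eq_left.mpr hR]
    nth_rw 2 [hR_eq]
    rw [staysBelow_iUnion]
    exact tendsto_measure_iInter_atTop
      (fun n => (measurableSet_staysBelow f hmeas (hRc.mono inter_subset_left)).nullMeasurableSet)
      (fun m n hmn => staysBelow_anti X f
        (inter_subset_inter_right _ (image_mono (Iio_subset_Iio hmn))))
      ⟨0, measure_ne_top μ _⟩
  refine le_of_tendsto_of_tendsto'
    (ENNReal.Tendsto.mul (hlim subset_union_left hS) (.inr (measure_ne_top μ _))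
      (hlim subset_union_right hS') (.inr (measure_ne_top μ _)))
    (hlim subset_rfl (hS.union hS')) fun n => ?_
  have hfin : (e '' Iio n).Finite := (finite_Iio n).image e
  rw [union_inter_distrib_right]
  exact measure_staysBelow_mul_le_of_finite hX hX0 hmeas f (hfin.inter_of_right _)
    (hfin.inter_of_right _)

end ProbabilityTheory.HasIndepIncrements

theorem hasIndepIncrements_nnreal {Ω : Type*} [MeasurableSpace Ω] {μ : Measure Ω}
    {X : ℝ → Ω → ℝ}
    (hindep : ∀ (n : ℕ) (τ : ℕ → ℝ), Monotone τ → (∀ i, 0 ≤ τ i) →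
      iIndepFun (fun i : Fin n => fun ω => X (τ (i + 1)) ω - X (τ i) ω) μ) :
    HasIndepIncrements (fun t : ℝ≥0 => X t) μ := by
  intro n t ht
  convert hindep n (fun k => t ⟨min n k, by omega⟩) (fun a b hab => ht (by simp; omega))
    (fun _ => NNReal.coe_nonneg _) using 5 with i ω <;> congr 1 <;> ext <;> simp

theorem exists_countable_frequently_mem_lt (f : ℝ → ℝ) {C : Set ℝ} (hC : C.Countable) :
    ∃ D, C ⊆ D ∧ D.Countable ∧ ∀ t ∉ D, ∀ y, f t < y → ∃ᶠ s in 𝓝[>] t, s ∈ D ∧ f s < y := by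
  let B (q : ℚ) : Set ℝ := {t | f t < q ∧ ∀ᶠ s in 𝓝[>] t, (q : ℝ) ≤ f s}
  have hB (q : ℚ) : (B q).Countable := by
    refine (countable_setOfPred_isolated_right_within (s := B q)).mono fun t ht => mem_sep ht ?_
    rw [inter_comm, nhdsWithin_inter', inf_principal_eq_bot]
    exact ht.2.mono fun s hs hsB => (not_lt.2 hs) hsB.1
  choose P hPf hPc hPdense using fun q : ℚ =>
    (TopologicalSpace.IsSeparable.of_separableSpace {s | f s < q}).exists_countable_dense_subset
  refine ⟨C ∪ (⋃ q, B q) ∪ ⋃ q, P q, subset_union_left.trans subset_union_left,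
    (hC.union (countable_iUnion hB)).union (countable_iUnion hPc), ?_⟩
  intro t ht y hy
  obtain ⟨q, hfq, hqy⟩ := exists_rat_btwn hy
  have hlt : ∃ᶠ s in 𝓝[>] t, f s < q := by
    simpa [Filter.not_eventually] using fun h => ht (Or.inl (Or.inr (mem_iUnion.2 ⟨q, hfq, h⟩)))
  have hP : ∃ᶠ s in 𝓝[>] t, s ∈ P q := by
    rw [(nhdsGT_basis t).frequently_iff] at hlt ⊢
    intro ε hε
    obtain ⟨s, hs, hfs⟩ := hlt ε hε
    exact mem_closure_iff_nhds.mp (hPdense q hfs) _ (isOpen_Ioo.mem_nhds hs)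
  exact hP.mono fun s hs => ⟨Or.inr (mem_iUnion.2 ⟨q, hs⟩), (hPf q hs).trans hqy⟩

theorem le_of_le_on_inter_Icc {x f : ℝ → ℝ} {D : Set ℝ}
    (hD : ∀ t ∉ D, ∀ y, f t < y → ∃ᶠ s in 𝓝[>] t, s ∈ D ∧ f s < y) {u v : ℝ} (hv : v ∈ D)
    (hx : ∀ t ∈ Icc u v, ContinuousWithinAt x (Ici t) t) (h : ∀ s ∈ D ∩ Icc u v, x s ≤ f s) :
    ∀ t ∈ Icc u v, x t ≤ f t := by
  intro t ht
  by_cases htD : t ∈ D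
  · exact h t ⟨htD, ht⟩
  have htv : t < v := ht.2.lt_of_ne fun h => htD (h ▸ hv)
  by_contra! hlt
  obtain ⟨y, hfy, hyx⟩ := exists_between hlt
  have hnear : ∀ᶠ s in 𝓝[>] t, s ∈ Ioo t v ∧ y < x s :=
    Filter.Eventually.and (Ioo_mem_nhdsGT htv)
      (((hx t ht).mono Ioi_subset_Ici_self).eventually (lt_mem_nhds hyx))
  obtain ⟨s, ⟨hsD, hfs⟩, hs, hys⟩ := ((hD t htD y hfy).and_eventually hnear).exists
  exact (h s ⟨hsD, ht.1.trans hs.1.le, hs.2.le⟩).not_gt (hfs.trans hys)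

theorem stmt5_general {Ω : Type*} [MeasurableSpace Ω] (μ : Measure Ω) [IsProbabilityMeasure μ]
    (X : ℝ → Ω → ℝ)
    (hX0 : ∀ ω, X 0 ω = 0)
    (hmeas : ∀ t, Measurable (X t))
    (hcadlag : ∀ ω, ∀ t ≥ (0:ℝ),
      Filter.Tendsto (fun s => X s ω) (nhdsWithin t (Set.Ici t)) (nhds (X t ω)))
    (hindep : ∀ (n : ℕ) (τ : ℕ → ℝ), Monotone τ → (∀ i, 0 ≤ τ i) →
      iIndepFun
        (fun i : Fin n => fun ω => X (τ (i + 1)) ω - X (τ i) ω) μ)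
    (f : ℝ → ℝ)
    (a b c : ℝ) (ha : 0 ≤ a) (hab : a < b) (hbc : b < c) :
    μ {ω | ∀ t ∈ Icc a b, X t ω ≤ f t} * μ {ω | ∀ t ∈ Icc b c, X t ω ≤ f t}
      ≤ μ {ω | ∀ t ∈ Icc a c, X t ω ≤ f t} := by
  obtain ⟨D, hbcD, hDc, hD⟩ :=
    exists_countable_frequently_mem_lt f ((countable_singleton c).insert b)
  have hreduce {u v : ℝ} (hu : 0 ≤ u) (hv : v ∈ D) :
      {ω | ∀ t ∈ Icc u v, X t ω ≤ f t} =
        staysBelow (fun t : ℝ≥0 => X t) (fun t => f t) (NNReal.toReal ⁻¹' (D ∩ Icc u v)) := by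
    ext ω
    refine ⟨fun h t ht => h t ht.2, fun h => le_of_le_on_inter_Icc hD hv
      (fun t ht => hcadlag ω t (hu.trans ht.1)) fun s hs => h ⟨s, hu.trans hs.2.1⟩ hs⟩
  rw [hreduce ha (hbcD (by simp)), hreduce (ha.trans hab.le) (hbcD (by simp)),
    hreduce ha (hbcD (by simp)), ← Icc_union_Icc_eq_Icc hab.le hbc.le, inter_union_distrib_left,
    preimage_union]
  exact (hasIndepIncrements_nnreal hindep).measure_staysBelow_mul_le_of_countable hX0
    (fun t => hmeas t) _ ((hDc.mono inter_subset_left).preimage NNReal.coe_injective)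
    ((hDc.mono inter_subset_left).preimage NNReal.coe_injective)

/-- For a Lévy process `X` (càdlàg, `X 0 = 0`, stationary independent increments),
a measurable function `f` and `0 ≤ a < b < c`, the non-exit probability over `[a,c]`
dominates the product of the non-exit probabilities over `[a,b]` and `[b,c]`. -/
theorem stmt5 {Ω : Type*} [MeasurableSpace Ω] (μ : Measure Ω) [IsProbabilityMeasure μ]
    (X : ℝ → Ω → ℝ)
    (hX0 : ∀ ω, X 0 ω = 0)
    (hmeas : ∀ t, Measurable (X t))
    (hcadlag : ∀ ω, ∀ t ≥ (0:ℝ),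
      Filter.Tendsto (fun s => X s ω) (nhdsWithin t (Set.Ici t)) (nhds (X t ω)))
    (hstat : ∀ s t : ℝ, 0 ≤ s → 0 ≤ t →
      IdentDistrib (fun ω => X (s + t) ω - X s ω) (X t) μ μ)
    (hindep : ∀ (n : ℕ) (τ : ℕ → ℝ), Monotone τ → (∀ i, 0 ≤ τ i) →
      iIndepFun
        (fun i : Fin n => fun ω => X (τ (i + 1)) ω - X (τ i) ω) μ)
    (f : ℝ → ℝ) (hf : Measurable f)
    (a b c : ℝ) (ha : 0 ≤ a) (hab : a < b) (hbc : b < c) :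
    μ {ω | ∀ t ∈ Icc a b, X t ω ≤ f t} * μ {ω | ∀ t ∈ Icc b c, X t ω ≤ f t}
      ≤ μ {ω | ∀ t ∈ Icc a c, X t ω ≤ f t} :=
  stmt5_general μ X hX0 hmeas hcadlag hindep f a b c ha hab hbc
end

section
/- Let X be a Lévy process, δ ≥ 0, 0 ≤ a < T, and 0 < c < ∞. Then P(X(t) ≤ 1 for all t ∈ [a,T]) = T^{−δ+o(1)} as T → ∞ if and only if P(X(t) ≤ c for all t ∈ [a,T]) = T^{−δ+o(1)} as T → ∞. -/
/-!
If `u ≤ v ≤ 2 ^ k * u`, then `P(X ≤ u on [a, T]) ≤ P(X ≤ v on [a, T])` and, iterating a doubling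
inequality, `P(X ≤ v on [a, 2 ^ k T]) ≤ 2 ^ k P(X ≤ u on [a, T])`. Since `log (2 ^ k) / log T → 0`
and `log (2 ^ k T) / log T → 1`, both probabilities then have the same exponent `-δ`.

The doubling inequality `P(X ≤ 2λ on [a, 2T]) ≤ 2 P(X ≤ λ on [a, T])` is proved on the grid
`h ℕ` with `h = T / 2 ^ n`: a path that stays below `2λ` but not below `λ` on `[a, T]` first
exceeds `λ` at some grid time `x ≤ T`, and from then on its increments stay below `λ` for a
time `T`. By independence and stationarity of increments, this has probability at most
`P(first passage at x) · P(X ≤ λ on [a, T])`, and the first-passage events are disjoint.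
Right-continuity lets `n → ∞` recover the whole interval.
-/

open MeasureTheory ProbabilityTheory Set Filter Topology

section
open Real

lemma tendsto_log_mul_div_log {K : ℝ} (hK : 0 < K) :
    Tendsto (fun T => log (K * T) / log T) atTop (𝓝 1) := by
  have h : ∀ᶠ T in atTop, log K / log T + 1 = log (K * T) / log T := by
    filter_upwards [eventually_gt_atTop 1] with T hT
    rw [log_mul hK.ne' (by positivity), add_div, div_self (log_pos hT).ne']
  simpa using (tendsto_congr' h).1 ((tendsto_const_nhds.div_atTop tendsto_log_atTop).add_const 1)

lemma tendsto_div_log_comp_mul_add {φ : ℝ → ℝ} {L : ℝ}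
    (hφ : Tendsto (fun T => φ T / log T) atTop (𝓝 L)) {K : ℝ} (hK : 0 < K) (c : ℝ) :
    Tendsto (fun T => (φ (K * T) + c) / log T) atTop (𝓝 L) := by
  have hKT : Tendsto (K * ·) atTop atTop := tendsto_id.const_mul_atTop hK
  have h : ∀ᶠ T in atTop,
      φ (K * T) / log (K * T) * (log (K * T) / log T) + c / log T = (φ (K * T) + c) / log T := by
    filter_upwards [hKT.eventually (eventually_gt_atTop 1)] with T hT
    rw [div_mul_div_cancel₀ (log_pos hT).ne', add_div]
  simpa using (tendsto_congr' h).1 (((hφ.comp hKT).mul (tendsto_log_mul_div_log hK)).add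
    (tendsto_const_nhds.div_atTop tendsto_log_atTop))

lemma tendsto_div_log_iff_of_le_of_le {φ ψ : ℝ → ℝ} {K c L : ℝ} (hK : 0 < K)
    (hφψ : ∀ᶠ T in atTop, φ T ≤ ψ T) (hψφ : ∀ᶠ T in atTop, ψ (K * T) ≤ φ T + c) :
    Tendsto (fun T => φ T / log T) atTop (𝓝 L) ↔ Tendsto (fun T => ψ T / log T) atTop (𝓝 L) := by
  have hdiv : ∀ {f g : ℝ → ℝ}, (∀ᶠ T in atTop, f T ≤ g T) →
      ∀ᶠ T in atTop, f T / log T ≤ g T / log T := fun h => by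
    filter_upwards [h, eventually_gt_atTop 1] with T hT hT1
    exact div_le_div_of_nonneg_right hT (log_pos hT1).le
  constructor
  · intro hφ
    have hψ : ∀ᶠ T in atTop, ψ T ≤ φ (K⁻¹ * T) + c := by
      filter_upwards [(tendsto_id.const_mul_atTop (inv_pos.2 hK)).eventually hψφ] with T hT
      rwa [mul_inv_cancel_left₀ hK.ne'] at hT
    exact tendsto_of_tendsto_of_tendsto_of_le_of_le' hφ
      (tendsto_div_log_comp_mul_add hφ (inv_pos.2 hK) c) (hdiv hφψ) (hdiv hψ)
  · intro hψ
    have hφ : ∀ᶠ T in atTop, ψ (K * T) + -c ≤ φ T := by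
      filter_upwards [hψφ] with T hT
      linarith
    exact tendsto_of_tendsto_of_tendsto_of_le_of_le' (tendsto_div_log_comp_mul_add hψ hK (-c)) hψ
      (hdiv hφ) (hdiv hφψ)

lemma tendsto_log_div_log_iff_of_le_of_le {p q : ℝ → ℝ} {K C L : ℝ} (hK : 0 < K) (hC : 0 < C)
    (hp : Antitone p) (hp0 : ∀ T, 0 ≤ p T)
    (hpq : ∀ᶠ T in atTop, p T ≤ q T) (hqp : ∀ᶠ T in atTop, q (K * T) ≤ C * p T) :
    Tendsto (fun T => log (p T) / log T) atTop (𝓝 L) ↔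
      Tendsto (fun T => log (q T) / log T) atTop (𝓝 L) := by
  have hKT : Tendsto (K * ·) atTop atTop := tendsto_id.const_mul_atTop hK
  by_cases hpos : ∀ T, 0 < p T
  · refine tendsto_div_log_iff_of_le_of_le (c := log C) hK ?_ ?_
    · filter_upwards [hpq] with T hT
      exact log_le_log (hpos T) hT
    · filter_upwards [hqp, hKT.eventually hpq] with T hT hT'
      rw [← log_mul (hpos T).ne' hC.ne', mul_comm (p T)]
      exact log_le_log ((hpos _).trans_le hT') hT
  · -- Once `p` vanishes, so does `q`, and both ratios are eventually `log 0 / log T = 0`.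
    simp only [not_forall, not_lt] at hpos
    obtain ⟨T₀, hT₀⟩ := hpos
    have hp_zero : ∀ᶠ T in atTop, p T = 0 := by
      filter_upwards [eventually_ge_atTop T₀] with T hT
      exact le_antisymm ((hp hT).trans hT₀) (hp0 T)
    have hq_zero : ∀ᶠ T in atTop, q T = 0 := by
      have hKinv : Tendsto (K⁻¹ * ·) atTop atTop := tendsto_id.const_mul_atTop (inv_pos.2 hK)
      filter_upwards [hpq, hp_zero, hKinv.eventually hqp, hKinv.eventually hp_zero]
        with T hpqT hpT hqT hpT'
      rw [mul_inv_cancel_left₀ hK.ne', hpT', mul_zero] at hqT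
      linarith
    refine tendsto_congr' ?_
    filter_upwards [hp_zero, hq_zero] with T h1 h2
    simp [h1, h2]

end

lemma exists_dyadic_mem_Ioo {b t u : ℝ} (ht : 0 ≤ t) (htu : t < u) (hub : u ≤ b) :
    ∃ n k : ℕ, k ≤ 2 ^ n ∧ t < b / 2 ^ n * k ∧ b / 2 ^ n * k < u := by
  have hb : 0 < b := ht.trans_lt (htu.trans_le hub)
  obtain ⟨n, hn⟩ := exists_pow_lt_of_lt_one (div_pos (sub_pos.2 htu) hb) one_half_lt_one
  set h := b / 2 ^ n
  have hh : 0 < h := by positivity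
  have hhu : h < u - t := by
    rwa [lt_div_iff₀ hb, one_div, inv_pow, mul_comm, ← div_eq_mul_inv] at hn
  set k := ⌊t / h⌋₊ + 1
  have hlt : t < h * k := by
    have := Nat.lt_floor_add_one (t / h)
    rw [div_lt_iff₀ hh, mul_comm] at this
    exact_mod_cast this
  have hku : h * k < u := by
    have := Nat.floor_le (div_nonneg ht hh.le)
    have : h * ⌊t / h⌋₊ ≤ t := by rwa [le_div_iff₀ hh, mul_comm] at this
    push_cast [k]
    linarith
  refine ⟨n, k, ?_, hlt, hku⟩
  have : h * k < h * 2 ^ n := by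
    rw [div_mul_cancel₀ b (by positivity)]
    exact hku.trans_le hub
  exact_mod_cast (lt_of_mul_lt_mul_left this hh.le).le

lemma forall_Icc_le_iff_forall_dyadic {f : ℝ → ℝ} {a b lam : ℝ} (ha : 0 ≤ a) (hab : a ≤ b)
    (hf : ∀ t ∈ Ico a b, Tendsto f (𝓝[≥] t) (𝓝 (f t))) :
    (∀ t ∈ Icc a b, f t ≤ lam) ↔
      ∀ n k : ℕ, k ≤ 2 ^ n → a ≤ b / 2 ^ n * k → f (b / 2 ^ n * k) ≤ lam := by
  refine ⟨fun H n k hk hak => H _ ⟨hak, ?_⟩, fun H t ht => ?_⟩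
  · calc b / 2 ^ n * k ≤ b / 2 ^ n * 2 ^ n := by
          gcongr
          · exact div_nonneg (ha.trans hab) (by positivity)
          · exact_mod_cast hk
      _ = b := div_mul_cancel₀ b (by positivity)
  rcases ht.2.eq_or_lt with rfl | htb
  · simpa using H 0 1 le_rfl (by simpa using ht.1)
  by_contra! hlt
  obtain ⟨u, hu, hsub⟩ :=
    (mem_nhdsGE_iff_exists_Ico_subset).1 (hf t ⟨ht.1, htb⟩ (Ioi_mem_nhds hlt))
  obtain ⟨n, k, hk, htk, hku⟩ :=
    exists_dyadic_mem_Ioo (ha.trans ht.1) (lt_min hu htb) (min_le_right u b)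
  exact (H n k hk (ht.1.trans htk.le)).not_gt
    (hsub ⟨htk.le, hku.trans_le (min_le_left u b)⟩)

lemma exists_firstPassage {x : ℕ → ℝ} {p : ℕ → Prop} (hp : Monotone p) {lam : ℝ} {M : ℕ}
    (hx : ∀ k ≤ 2 * M, p k → x k ≤ 2 * lam) (hM : ∃ k ≤ M, p k ∧ lam < x k) :
    ∃ i ≤ M, (p i ∧ lam < x i ∧ ∀ k < i, p k → x k ≤ lam) ∧ ∀ k ≤ M, x (i + k) - x i ≤ lam := by
  classical
  obtain ⟨hiM, hpi, hlt⟩ := Nat.find_spec hM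
  refine ⟨Nat.find hM, hiM, ⟨hpi, hlt, fun k hk hpk => ?_⟩, fun k hk => ?_⟩
  · by_contra! hk'
    exact Nat.find_min hM hk ⟨hk.le.trans hiM, hpk, hk'⟩
  · have := hx (Nat.find hM + k) (by omega) (hp (Nat.le_add_right _ _) hpi)
    linarith

structure IsLevyProcess {Ω : Type*} [MeasurableSpace Ω] (X : ℝ → Ω → ℝ) (μ : Measure Ω) :
    Prop where
  zero : ∀ ω, X 0 ω = 0
  measurable : ∀ t, Measurable (X t)
  rightContinuous : ∀ ω, ∀ t ≥ (0 : ℝ), Tendsto (fun s => X s ω) (𝓝[≥] t) (𝓝 (X t ω))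
  identDistrib_sub : ∀ s t : ℝ, 0 ≤ s → 0 ≤ t →
    IdentDistrib (fun ω => X (s + t) ω - X s ω) (X t) μ μ
  iIndepFun_sub : ∀ (n : ℕ) (τ : ℕ → ℝ), Monotone τ → (∀ i, 0 ≤ τ i) →
    iIndepFun (fun i : Fin n => fun ω => X (τ (i + 1)) ω - X (τ i) ω) μ

namespace IsLevyProcess

variable {Ω : Type*} [MeasurableSpace Ω] {μ : Measure Ω} {X : ℝ → Ω → ℝ}
  {τ σ : ℕ → ℝ}

lemma iIndepFun_increments (hX : IsLevyProcess X μ) (hτ : Monotone τ) (hτ0 : ∀ i, 0 ≤ τ i) :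
    iIndepFun (fun l ω => X (τ (l + 1)) ω - X (τ l) ω) μ := by
  refine iIndepFun_iff_finset.2 fun s => ?_
  obtain ⟨n, hn⟩ : ∃ n, ∀ l ∈ s, l < n :=
    ⟨s.sup id + 1, fun l hl => Nat.lt_succ_of_le (Finset.le_sup (f := id) hl)⟩
  exact (hX.iIndepFun_sub n τ hτ hτ0).precomp (g := fun l : s => ⟨l, hn l l.2⟩)
    fun l l' h => Subtype.ext (congrArg Fin.val h)

lemma identDistrib_increments (hX : IsLevyProcess X μ) (hτ : Monotone τ) (hτ0 : ∀ i, 0 ≤ τ i)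
    (hσ : Monotone σ) (hσ0 : ∀ i, 0 ≤ σ i) (hτσ : ∀ l, τ (l + 1) - τ l = σ (l + 1) - σ l) :
    IdentDistrib (fun ω k => X (τ k) ω - X (τ 0) ω) (fun ω k => X (σ k) ω - X (σ 0) ω) μ μ := by
  have hstep : ∀ {ρ : ℕ → ℝ}, Monotone ρ → (∀ i, 0 ≤ ρ i) → ∀ l,
      IdentDistrib (fun ω => X (ρ (l + 1)) ω - X (ρ l) ω) (X (ρ (l + 1) - ρ l)) μ μ :=
    fun {ρ} hρ hρ0 l => by
      simpa using hX.identDistrib_sub (ρ l) (ρ (l + 1) - ρ l) (hρ0 l)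
        (sub_nonneg.2 (hρ l.le_succ))
  have hinc := IdentDistrib.pi (fun l => (hstep hτ hτ0 l).trans (hτσ l ▸ (hstep hσ hσ0 l).symm))
    (hX.iIndepFun_increments hτ hτ0) (hX.iIndepFun_increments hσ hσ0)
  have hsum := hinc.comp (u := fun y k => ∑ l ∈ Finset.range k, y l)
    (measurable_pi_lambda _ fun k => Finset.measurable_sum _ fun l _ => measurable_pi_apply l)
  have htelescope : ∀ ρ : ℕ → ℝ, (fun y k => ∑ l ∈ Finset.range k, y l) ∘
      (fun ω l => X (ρ (l + 1)) ω - X (ρ l) ω) = fun ω k => X (ρ k) ω - X (ρ 0) ω :=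
    fun ρ => funext fun ω => funext (Finset.sum_range_sub (fun l => X (ρ l) ω))
  rwa [htelescope, htelescope] at hsum

lemma indepFun_stopped_increments (hX : IsLevyProcess X μ) (hτ : Monotone τ) (hτ0 : τ 0 = 0)
    (i : ℕ) :
    IndepFun (fun ω k => X (τ (min k i)) ω) (fun ω k => X (τ (i + k)) ω - X (τ i) ω) μ := by
  set inc : ℕ → Ω → ℝ := fun l ω => X (τ (l + 1)) ω - X (τ l) ω
  have hτ_nonneg : ∀ l, 0 ≤ τ l := fun l => hτ0 ▸ hτ l.zero_le
  have hinc : ∀ l, Measurable (inc l) := fun l => (hX.measurable _).sub (hX.measurable _)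
  have hindep := indep_iSup_of_disjoint (fun l => (hinc l).comap_le)
    (hX.iIndepFun_increments hτ hτ_nonneg).iIndep (S := Iio i) (T := Ici i)
    (Set.disjoint_left.2 fun l (h₁ : l < i) (h₂ : i ≤ l) => h₁.not_ge h₂)
  have hsum : ∀ {S : Set ℕ} (g : ℕ → ℕ) (s : ℕ → Finset ℕ), (∀ k, ∀ l ∈ s k, g l ∈ S) →
      Measurable[⨆ l ∈ S, Real.measurableSpace.comap (inc l)]
        fun ω k => ∑ l ∈ s k, inc (g l) ω :=
    fun g s hs => @measurable_pi_lambda _ _ _ (_) _ _ fun k => Finset.measurable_sum _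
      fun l hl => Measurable.of_comap_le
        (le_iSup₂ (f := fun l _ => Real.measurableSpace.comap (inc l)) (g l) (hs k l hl))
  have hpast : (fun ω k => X (τ (min k i)) ω) = fun ω k => ∑ l ∈ Finset.range (min k i), inc l ω :=
    funext fun ω => funext fun k => by
      rw [Finset.sum_range_sub (fun l => X (τ l) ω), hτ0, hX.zero, sub_zero]
  have hfuture : (fun ω k => X (τ (i + k)) ω - X (τ i) ω) =
      fun ω k => ∑ l ∈ Finset.range k, inc (i + l) ω :=
    funext fun ω => funext fun k => (Finset.sum_range_sub (fun l => X (τ (i + l)) ω) k).symm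
  rw [IndepFun_iff_Indep, hpast, hfuture]
  refine indep_of_indep_of_le_right (indep_of_indep_of_le_left hindep ?_) ?_
  · exact (hsum id _ fun k l hl => (Finset.mem_range.1 hl).trans_le (min_le_right k i)).comap_le
  · exact (hsum (i + ·) _ fun k l _ => Nat.le_add_right i l).comap_le

lemma measure_firstPassage_inter_le (hX : IsLevyProcess X μ) {h : ℝ} (hh : 0 ≤ h)
    (a lam : ℝ) (i M : ℕ) :
    μ ({ω | a ≤ h * i ∧ lam < X (h * i) ω ∧ ∀ k < i, a ≤ h * k → X (h * k) ω ≤ lam}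
        ∩ {ω | ∀ k ≤ M, X (h * ↑(i + k)) ω - X (h * i) ω ≤ lam})
      ≤ μ {ω | a ≤ h * i ∧ lam < X (h * i) ω ∧ ∀ k < i, a ≤ h * k → X (h * k) ω ≤ lam}
        * μ {ω | ∀ k ≤ M, a ≤ h * k → X (h * k) ω ≤ lam} := by
  have hτ : Monotone fun k : ℕ => h * k :=
    fun k l hkl => mul_le_mul_of_nonneg_left (by exact_mod_cast hkl) hh
  set SF : Set (ℕ → ℝ) := {y | ∀ k ≤ M, y k ≤ lam}
  have hpast : {ω | a ≤ h * i ∧ lam < X (h * i) ω ∧ ∀ k < i, a ≤ h * k → X (h * k) ω ≤ lam}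
      = (fun ω (k : ℕ) => X (h * ↑(min k i)) ω) ⁻¹'
        {y | a ≤ h * i ∧ lam < y i ∧ ∀ k < i, a ≤ h * k → y k ≤ lam} := by
    ext ω
    simp only [mem_preimage, mem_ofPred_eq, min_self]
    exact and_congr_right fun _ => and_congr_right fun _ =>
      forall₂_congr fun k hk => by rw [min_eq_left hk.le]
  have hfuture : μ ((fun ω k => X (h * ↑(i + k)) ω - X (h * i) ω) ⁻¹' SF)
      = μ ((fun ω (k : ℕ) => X (h * k) ω) ⁻¹' SF) := by
    have hid := hX.identDistrib_increments (τ := fun k => h * ↑(i + k)) (σ := fun k => h * k)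
      (hτ.comp fun k l hkl => by omega) (fun k => by positivity) hτ (fun k => by positivity)
      (fun l => by push_cast; ring)
    simpa only [Nat.cast_zero, mul_zero, hX.zero, sub_zero, add_zero] using
      hid.measure_mem_eq (s := SF) (by measurability)
  have hfuture_eq : {ω | ∀ k ≤ M, X (h * ↑(i + k)) ω - X (h * i) ω ≤ lam}
      = (fun ω k => X (h * ↑(i + k)) ω - X (h * i) ω) ⁻¹' SF := rfl
  rw [hpast, hfuture_eq,
    (hX.indepFun_stopped_increments hτ (by simp) i).measure_inter_preimage_eq_mul _ SF
      (by measurability) (by measurability), hfuture]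
  gcongr
  exact fun ω hω k hk _ => hω k hk

lemma measure_grid_le_two_mul [IsProbabilityMeasure μ] (hX : IsLevyProcess X μ) {h : ℝ}
    (hh : 0 ≤ h) (a lam : ℝ) (M : ℕ) :
    μ {ω | ∀ k ≤ 2 * M, a ≤ h * k → X (h * k) ω ≤ 2 * lam}
      ≤ 2 * μ {ω | ∀ k ≤ M, a ≤ h * k → X (h * k) ω ≤ lam} := by
  set G := {ω | ∀ k ≤ M, a ≤ h * k → X (h * k) ω ≤ lam}
  set P : ℕ → Set Ω := fun i =>
    {ω | a ≤ h * i ∧ lam < X (h * i) ω ∧ ∀ k < i, a ≤ h * k → X (h * k) ω ≤ lam}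
  set F : ℕ → Set Ω := fun i => {ω | ∀ k ≤ M, X (h * ↑(i + k)) ω - X (h * i) ω ≤ lam}
  have hcover : {ω | ∀ k ≤ 2 * M, a ≤ h * k → X (h * k) ω ≤ 2 * lam}
      ⊆ G ∪ ⋃ i ∈ Finset.range (M + 1), P i ∩ F i := by
    intro ω hω
    by_cases hG : ω ∈ G
    · exact Or.inl hG
    simp only [G, mem_ofPred_eq, not_forall, not_le, exists_prop] at hG
    obtain ⟨i, hiM, hPi, hFi⟩ := exists_firstPassage (x := fun k => X (h * k) ω)
      (fun k l hkl hak => hak.trans (mul_le_mul_of_nonneg_left (by exact_mod_cast hkl) hh)) hω hG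
    exact Or.inr (mem_biUnion (Finset.mem_range.2 (Nat.lt_succ_of_le hiM)) ⟨hPi, hFi⟩)
  have hPlt : ∀ {i j : ℕ}, i < j → Disjoint (P i) (P j) := fun hij =>
    Set.disjoint_left.2 fun ω hωi hωj => hωi.2.1.not_ge (hωj.2.2 _ hij hωi.1)
  have hPsum : ∑ i ∈ Finset.range (M + 1), μ (P i) ≤ 1 := by
    have := hX.measurable
    rw [← measure_biUnion_finset (fun i _ j _ hij => hij.lt_or_gt.elim hPlt fun h => (hPlt h).symm)
      fun i _ => by measurability]
    exact prob_le_one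
  calc μ {ω | ∀ k ≤ 2 * M, a ≤ h * k → X (h * k) ω ≤ 2 * lam}
      ≤ μ G + ∑ i ∈ Finset.range (M + 1), μ (P i ∩ F i) :=
        (measure_mono hcover).trans ((measure_union_le _ _).trans
          (add_le_add le_rfl (measure_biUnion_finset_le _ _)))
    _ ≤ μ G + (∑ i ∈ Finset.range (M + 1), μ (P i)) * μ G := by
        rw [Finset.sum_mul]
        gcongr with i
        exact hX.measure_firstPassage_inter_le hh a lam i M
    _ ≤ μ G + 1 * μ G := by gcongr
    _ = 2 * μ G := by ring

lemma measure_le_two_mul [IsProbabilityMeasure μ] (hX : IsLevyProcess X μ) {a : ℝ} (ha : 0 ≤ a)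
    (lam T : ℝ) :
    μ {ω | ∀ t ∈ Icc a (2 * T), X t ω ≤ 2 * lam} ≤ 2 * μ {ω | ∀ t ∈ Icc a T, X t ω ≤ lam} := by
  rcases lt_or_ge T a with hTa | haT
  · have huniv : {ω | ∀ t ∈ Icc a T, X t ω ≤ lam} = univ := by
      simp [Icc_eq_empty (not_le.2 hTa)]
    rw [huniv, measure_univ, mul_one]
    exact prob_le_one.trans one_le_two
  have hT : 0 ≤ T := ha.trans haT
  set G : ℕ → Set Ω := fun n =>
    {ω | ∀ k : ℕ, k ≤ 2 ^ n → a ≤ T / 2 ^ n * k → X (T / 2 ^ n * k) ω ≤ lam}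
  have hG : {ω | ∀ t ∈ Icc a T, X t ω ≤ lam} = ⋂ n, G n := by
    ext ω
    simpa only [G, mem_iInter, mem_ofPred_eq] using forall_Icc_le_iff_forall_dyadic ha haT
      fun t ht => hX.rightContinuous ω t (ha.trans ht.1)
  have hGanti : Antitone G := antitone_nat_of_succ_le fun n ω hω k hk hak => by
    have hcast : T / 2 ^ n * k = T / 2 ^ (n + 1) * ↑(2 * k) := by
      push_cast; field_simp; ring
    rw [hcast] at hak ⊢
    exact hω (2 * k) (by rw [pow_succ]; omega) hak
  have hGmeas : ∀ n, MeasurableSet (G n) := fun n => by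
    have := hX.measurable
    measurability
  have hbound : ∀ n, μ {ω | ∀ t ∈ Icc a (2 * T), X t ω ≤ 2 * lam} ≤ 2 * μ (G n) := fun n => by
    refine le_trans (measure_mono ?_) (hX.measure_grid_le_two_mul (by positivity) a lam (2 ^ n))
    intro ω hω k hk hak
    refine hω _ ⟨hak, ?_⟩
    calc T / 2 ^ n * k ≤ T / 2 ^ n * ↑(2 * 2 ^ n) := by gcongr; exact_mod_cast hk
      _ = 2 * T := by field_simp
  rw [hG, hGanti.measure_iInter (fun n => (hGmeas n).nullMeasurableSet) ⟨0, measure_ne_top _ _⟩,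
    ENNReal.mul_iInf_of_ne two_ne_zero ENNReal.ofNat_ne_top]
  exact le_iInf hbound

lemma measure_le_two_pow_mul [IsProbabilityMeasure μ] (hX : IsLevyProcess X μ) {a : ℝ}
    (ha : 0 ≤ a) (lam T : ℝ) (k : ℕ) :
    μ {ω | ∀ t ∈ Icc a (2 ^ k * T), X t ω ≤ 2 ^ k * lam}
      ≤ 2 ^ k * μ {ω | ∀ t ∈ Icc a T, X t ω ≤ lam} := by
  induction k with
  | zero => simp
  | succ k ih =>
    calc μ {ω | ∀ t ∈ Icc a (2 ^ (k + 1) * T), X t ω ≤ 2 ^ (k + 1) * lam}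
        = μ {ω | ∀ t ∈ Icc a (2 * (2 ^ k * T)), X t ω ≤ 2 * (2 ^ k * lam)} := by
          rw [pow_succ', mul_assoc, mul_assoc]
      _ ≤ 2 * μ {ω | ∀ t ∈ Icc a (2 ^ k * T), X t ω ≤ 2 ^ k * lam} :=
          hX.measure_le_two_mul ha _ _
      _ ≤ 2 ^ (k + 1) * μ {ω | ∀ t ∈ Icc a T, X t ω ≤ lam} := by
          rw [pow_succ', mul_assoc]
          gcongr

lemma tendsto_log_measure_div_log_iff [IsProbabilityMeasure μ] (hX : IsLevyProcess X μ)
    {a : ℝ} (ha : 0 ≤ a) {u v : ℝ} (hu : 0 < u) (huv : u ≤ v) (L : ℝ) :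
    Tendsto (fun T => Real.log (μ {ω | ∀ t ∈ Icc a T, X t ω ≤ u}).toReal / Real.log T)
        atTop (𝓝 L) ↔
      Tendsto (fun T => Real.log (μ {ω | ∀ t ∈ Icc a T, X t ω ≤ v}).toReal / Real.log T)
        atTop (𝓝 L) := by
  obtain ⟨k, hk⟩ := pow_unbounded_of_one_lt (v / u) one_lt_two
  have hvk : v ≤ 2 ^ k * u := ((div_lt_iff₀ hu).1 hk).le
  refine tendsto_log_div_log_iff_of_le_of_le (K := 2 ^ k) (C := 2 ^ k) (by positivity)
    (by positivity) (fun T₁ T₂ hT => ?_) (fun T => ENNReal.toReal_nonneg)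
    (.of_forall fun T => ?_) (.of_forall fun T => ?_)
  · exact ENNReal.toReal_mono (measure_ne_top _ _)
      (measure_mono fun ω hω t ht => hω t ⟨ht.1, ht.2.trans hT⟩)
  · exact ENNReal.toReal_mono (measure_ne_top _ _)
      (measure_mono fun ω hω t ht => (hω t ht).trans huv)
  · have hle : μ {ω | ∀ t ∈ Icc a (2 ^ k * T), X t ω ≤ v}
        ≤ 2 ^ k * μ {ω | ∀ t ∈ Icc a T, X t ω ≤ u} :=
      le_trans (measure_mono fun ω hω t ht => (hω t ht).trans hvk)
        (hX.measure_le_two_pow_mul ha u T k)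
    simpa [ENNReal.toReal_mul] using ENNReal.toReal_mono (by finiteness) hle

end IsLevyProcess

theorem stmt6_general {Ω : Type*} [MeasurableSpace Ω] (μ : Measure Ω) [IsProbabilityMeasure μ]
    (X : ℝ → Ω → ℝ)
    (hX0 : ∀ ω, X 0 ω = 0)
    (hmeas : ∀ t, Measurable (X t))
    (hcadlag : ∀ ω, ∀ t ≥ (0:ℝ),
      Filter.Tendsto (fun s => X s ω) (nhdsWithin t (Set.Ici t)) (nhds (X t ω)))
    (hstat : ∀ s t : ℝ, 0 ≤ s → 0 ≤ t →
      IdentDistrib (fun ω => X (s + t) ω - X s ω) (X t) μ μ)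
    (hindep : ∀ (n : ℕ) (τ : ℕ → ℝ), Monotone τ → (∀ i, 0 ≤ τ i) →
      iIndepFun
        (fun i : Fin n => fun ω => X (τ (i + 1)) ω - X (τ i) ω) μ)
    (δ : ℝ) (a : ℝ) (ha : 0 ≤ a) (c : ℝ) (hc : 0 < c) :
    Tendsto (fun T : ℝ =>
        Real.log ((μ {ω | ∀ t ∈ Icc a T, X t ω ≤ 1}).toReal) / Real.log T)
      atTop (nhds (-δ))
    ↔ Tendsto (fun T : ℝ =>
        Real.log ((μ {ω | ∀ t ∈ Icc a T, X t ω ≤ c}).toReal) / Real.log T)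
      atTop (nhds (-δ)) := by
  have hX : IsLevyProcess X μ := ⟨hX0, hmeas, hcadlag, hstat, hindep⟩
  rcases le_total 1 c with h1c | hc1
  · exact hX.tendsto_log_measure_div_log_iff ha one_pos h1c (-δ)
  · exact (hX.tendsto_log_measure_div_log_iff ha hc hc1 (-δ)).symm

/-- For a Lévy process `X`, `δ ≥ 0`, `0 ≤ a` and `0 < c < ∞`:
`P(X(t) ≤ 1, a ≤ t ≤ T) = T^{-δ+o(1)}` iff `P(X(t) ≤ c, a ≤ t ≤ T) = T^{-δ+o(1)}`,
where `p(T) = T^{-δ+o(1)}` means `log p(T) / log T → -δ` as `T → ∞`. -/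
theorem stmt6 {Ω : Type*} [MeasurableSpace Ω] (μ : Measure Ω) [IsProbabilityMeasure μ]
    (X : ℝ → Ω → ℝ)
    (hX0 : ∀ ω, X 0 ω = 0)
    (hmeas : ∀ t, Measurable (X t))
    (hcadlag : ∀ ω, ∀ t ≥ (0:ℝ),
      Filter.Tendsto (fun s => X s ω) (nhdsWithin t (Set.Ici t)) (nhds (X t ω)))
    (hstat : ∀ s t : ℝ, 0 ≤ s → 0 ≤ t →
      IdentDistrib (fun ω => X (s + t) ω - X s ω) (X t) μ μ)
    (hindep : ∀ (n : ℕ) (τ : ℕ → ℝ), Monotone τ → (∀ i, 0 ≤ τ i) →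
      iIndepFun
        (fun i : Fin n => fun ω => X (τ (i + 1)) ω - X (τ i) ω) μ)
    (δ : ℝ) (hδ : 0 ≤ δ) (a : ℝ) (ha : 0 ≤ a) (c : ℝ) (hc : 0 < c) :
    Tendsto (fun T : ℝ =>
        Real.log ((μ {ω | ∀ t ∈ Icc a T, X t ω ≤ 1}).toReal) / Real.log T)
      atTop (nhds (-δ))
    ↔ Tendsto (fun T : ℝ =>
        Real.log ((μ {ω | ∀ t ∈ Icc a T, X t ω ≤ c}).toReal) / Real.log T)
      atTop (nhds (-δ)) :=
  stmt6_general μ X hX0 hmeas hcadlag hstat hindep δ a ha c hc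
end

section
/- Let B be a standard Brownian motion, c > 0, and for T > 1 define h_T(t) = max{(ln T)^5, t^{3/4}}. Then P(there exists t ∈ [0,T] with B(t) > c·h_T(t)) ≲ e^{−(ln T)²/4} as T → ∞. -/
/-!
Cut `[0, T]` into the blocks `[k, k + 1]`, `k ≤ ⌊T⌋`. On block `k` the barrier is at least
`a_k = c · max ((ln T)^5, k^{3/4})`, and Lévy's reflection inequality gives
`P (sup_{[0, k+1]} B > a_k) ≤ 2 P (B_{k+1} ≥ a_k) ≤ 2 exp (-a_k² / (2 (k + 1)))`.
The exponents `5` and `3/4` make `a_k² ≥ 2 (ln T)² (k + 1)` for every `k` once `T` is large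
(split according to whether `k` is below or above `(ln T)^6`), so each block costs at most
`2 e^{-(ln T)²}` and the `⌊T⌋ + 1 ≤ 2T` blocks together at most
`4 T e^{-(ln T)²} ≤ 4 e^{-(ln T)²/4}`.

Lévy's inequality is proved for partial sums of independent variables whose tail sums are
nonnegative with probability `≥ 1/2`, by splitting according to the first step at which the walk
exceeds the level; continuity of the paths transfers it from dyadic grids to `[0, S]`.
-/

open MeasureTheory ProbabilityTheory Set Filter
open scoped NNReal ENNReal Topology

lemma one_le_two_mul_gaussianReal_Ici_zero (v : ℝ≥0) : 1 ≤ 2 * gaussianReal 0 v (Ici 0) := by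
  have hsymm : gaussianReal 0 v (Iic 0) = gaussianReal 0 v (Ici 0) := by
    have hneg := gaussianReal_map_neg (μ := 0) (v := v)
    rw [neg_zero] at hneg
    conv_lhs => rw [← hneg, Measure.map_apply measurable_neg measurableSet_Iic]
    simp
  calc (1 : ℝ≥0∞) = gaussianReal 0 v (Iic 0 ∪ Ici 0) := by rw [Iic_union_Ici, measure_univ]
    _ ≤ gaussianReal 0 v (Iic 0) + gaussianReal 0 v (Ici 0) := measure_union_le _ _
    _ = 2 * gaussianReal 0 v (Ici 0) := by rw [hsymm, two_mul]

lemma gaussianReal_Ici_le_exp (v : ℝ≥0) {a : ℝ} (ha : 0 ≤ a) :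
    gaussianReal 0 v (Ici a) ≤ ENNReal.ofReal (Real.exp (-a ^ 2 / (2 * v))) := by
  have hchernoff := measure_ge_le_exp_mul_mgf (μ := gaussianReal 0 v) (X := id) a
    (t := a / v) (by positivity) (integrable_exp_mul_gaussianReal _)
  rw [mgf_id_gaussianReal, ← Real.exp_add] at hchernoff
  rw [← ofReal_measureReal]
  refine ENNReal.ofReal_le_ofReal (hchernoff.trans_eq ?_)
  congr 1
  rcases eq_or_ne (v : ℝ) 0 with hv | hv
  · simp [hv]
  · field_simp
    ring

section FirstPassage

variable {Ω : Type*} (X : ℕ → Ω → ℝ) (a : ℝ)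

def firstPassageSet (i : ℕ) : Set Ω :=
  {ω | a < ∑ j ∈ Finset.range i, X j ω ∧ ∀ k < i, ∑ j ∈ Finset.range k, X j ω ≤ a}

lemma measurableSet_firstPassageSet (i : ℕ) :
    MeasurableSet[⨆ j < i, MeasurableSpace.comap (X j) inferInstance] (firstPassageSet X a i) := by
  have hsum : ∀ k ≤ i, Measurable[⨆ j < i, MeasurableSpace.comap (X j) inferInstance]
      (fun ω => ∑ j ∈ Finset.range k, X j ω) :=
    fun k hk => Finset.measurable_sum _ fun j hj => Measurable.of_comap_le <|
      le_iSup₂_of_le (f := fun j (_ : j < i) => MeasurableSpace.comap (X j) inferInstance) j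
        ((Finset.mem_range.1 hj).trans_le hk) le_rfl
  simp only [firstPassageSet, ofPred_and, ofPred_forall]
  exact (hsum i le_rfl measurableSet_Ioi).inter <| MeasurableSet.iInter fun k =>
    MeasurableSet.iInter fun hk => hsum k hk.le measurableSet_Iic

lemma pairwise_disjoint_firstPassageSet :
    Pairwise (Function.onFun Disjoint (firstPassageSet X a)) := by
  intro i j hij
  rcases hij.lt_or_gt with h | h
  · exact disjoint_left.2 fun ω hi hj => (hj.2 i h).not_gt hi.1
  · exact disjoint_left.2 fun ω hi hj => (hi.2 j h).not_gt hj.1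

lemma setOf_exists_lt_subset_biUnion_firstPassageSet (N : ℕ) :
    {ω | ∃ k ≤ N, a < ∑ j ∈ Finset.range k, X j ω}
      ⊆ ⋃ i ∈ Finset.range (N + 1), firstPassageSet X a i := by
  rintro ω ⟨k, hk, hak⟩
  have hex : ∃ i, a < ∑ j ∈ Finset.range i, X j ω := ⟨k, hak⟩
  exact mem_biUnion (Finset.mem_range.2 (Nat.lt_succ_of_le ((Nat.find_min' hex hak).trans hk)))
    ⟨Nat.find_spec hex, fun j hj => not_lt.1 (Nat.find_min hex hj)⟩

end FirstPassage

section PartialSums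

variable {Ω : Type*} [MeasurableSpace Ω] {μ : Measure Ω} {X : ℕ → Ω → ℝ} {N : ℕ}

lemma measure_inter_preimage_sum_Ico_eq_mul (hX : ∀ j, Measurable (X j))
    (hindep : iIndepFun (fun j : Fin N => X j) μ) {i : ℕ} (hi : i ≤ N) {s : Set Ω}
    (hs : MeasurableSet[⨆ j < i, MeasurableSpace.comap (X j) inferInstance] s) {t : Set ℝ}
    (ht : MeasurableSet t) :
    μ (s ∩ (fun ω => ∑ j ∈ Finset.Ico i N, X j ω) ⁻¹' t)
      = μ s * μ ((fun ω => ∑ j ∈ Finset.Ico i N, X j ω) ⁻¹' t) := by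
  let m : Fin N → MeasurableSpace Ω := fun j => MeasurableSpace.comap (X j) inferInstance
  have hdisj : Disjoint {j : Fin N | (j : ℕ) < i} {j | i ≤ (j : ℕ)} :=
    disjoint_left.2 fun j (hlt : (j : ℕ) < i) (hle : i ≤ (j : ℕ)) => hlt.not_ge hle
  have hpast : (⨆ j < i, MeasurableSpace.comap (X j) inferInstance)
      ≤ ⨆ j ∈ {j : Fin N | (j : ℕ) < i}, m j :=
    iSup₂_le fun j hj => le_iSup₂_of_le (f := fun j (_ : j ∈ {j : Fin N | (j : ℕ) < i}) => m j)
      ⟨j, hj.trans_le hi⟩ hj le_rfl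
  have hfuture : Measurable[⨆ j ∈ {j : Fin N | i ≤ (j : ℕ)}, m j]
      (fun ω => ∑ j ∈ Finset.Ico i N, X j ω) :=
    Finset.measurable_sum _ fun j hj => Measurable.of_comap_le <|
      le_iSup₂_of_le (f := fun j (_ : j ∈ {j : Fin N | i ≤ (j : ℕ)}) => m j)
        ⟨j, (Finset.mem_Ico.1 hj).2⟩ (Finset.mem_Ico.1 hj).1 le_rfl
  exact (Indep_iff _ _ _).1
    (indep_iSup_of_disjoint (m := m) (fun j => (hX j).comap_le) hindep.iIndep hdisj) _ _
    (hpast _ hs) (hfuture ht)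

/-- Lévy's maximal inequality. -/
theorem measure_exists_partialSum_gt_le (hX : ∀ j, Measurable (X j))
    (hindep : iIndepFun (fun j : Fin N => X j) μ)
    (hmedian : ∀ i ≤ N, 1 ≤ 2 * μ {ω | 0 ≤ ∑ j ∈ Finset.Ico i N, X j ω}) (a : ℝ) :
    μ {ω | ∃ k ≤ N, a < ∑ j ∈ Finset.range k, X j ω}
      ≤ 2 * μ {ω | a ≤ ∑ j ∈ Finset.range N, X j ω} := by
  set A := firstPassageSet X a
  set D : ℕ → Set Ω := fun i => (fun ω => ∑ j ∈ Finset.Ico i N, X j ω) ⁻¹' Ici 0 with hD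
  have hsplit : ∀ i ≤ N, μ (A i) ≤ 2 * μ (A i ∩ D i) := by
    intro i hi
    rw [measure_inter_preimage_sum_Ico_eq_mul hX hindep hi
      (measurableSet_firstPassageSet X a i) measurableSet_Ici]
    calc μ (A i) = μ (A i) * 1 := (mul_one _).symm
      _ ≤ μ (A i) * (2 * μ (D i)) := by gcongr; exact hmedian i hi
      _ = 2 * (μ (A i) * μ (D i)) := by ring
  have hreach : (⋃ i ∈ Finset.range (N + 1), A i ∩ D i)
      ⊆ {ω | a ≤ ∑ j ∈ Finset.range N, X j ω} := by
    simp only [iUnion_subset_iff, Finset.mem_range]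
    rintro i hi ω ⟨hωA, hωD⟩
    have := Finset.sum_range_add_sum_Ico (fun j => X j ω) (Nat.le_of_lt_succ hi)
    simp only [hD, mem_preimage, mem_Ici] at hωD
    show a ≤ ∑ j ∈ Finset.range N, X j ω
    linarith [hωA.1]
  have hAD_meas : ∀ i, MeasurableSet (A i ∩ D i) := fun i =>
    (iSup₂_le (fun j _ => (hX j).comap_le) _ (measurableSet_firstPassageSet X a i)).inter
      (measurableSet_preimage (Finset.measurable_sum _ fun j _ => hX j) measurableSet_Ici)
  have hAD_disj : Pairwise (Function.onFun Disjoint fun i => A i ∩ D i) := fun i j h =>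
    (pairwise_disjoint_firstPassageSet X a h).mono inter_subset_left inter_subset_left
  calc _ ≤ ∑ i ∈ Finset.range (N + 1), μ (A i) :=
        (measure_mono (setOf_exists_lt_subset_biUnion_firstPassageSet X a N)).trans
          (measure_biUnion_finset_le _ _)
    _ ≤ ∑ i ∈ Finset.range (N + 1), 2 * μ (A i ∩ D i) :=
        Finset.sum_le_sum fun i hi => hsplit i (Nat.le_of_lt_succ (Finset.mem_range.1 hi))
    _ = 2 * μ (⋃ i ∈ Finset.range (N + 1), A i ∩ D i) := by
        rw [← Finset.mul_sum, measure_biUnion_finset (hAD_disj.set_pairwise _)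
          fun i _ => hAD_meas i]
    _ ≤ _ := by gcongr

end PartialSums

lemma exists_dyadic_lt_of_lt {f : ℝ → ℝ} (hf : Continuous f) {S t a : ℝ} (ht : t ∈ Icc 0 S)
    (hat : a < f t) : ∃ n k : ℕ, k ≤ 2 ^ n ∧ a < f (S * k / 2 ^ n) := by
  rcases (ht.1.trans ht.2).eq_or_lt with hS | hS
  · obtain rfl : t = 0 := le_antisymm (hS ▸ ht.2) ht.1
    exact ⟨0, 0, Nat.zero_le _, by simpa using hat⟩
  have hlow : ∀ n : ℕ, t - S / 2 ^ n ≤ S * ⌊t * 2 ^ n / S⌋₊ / 2 ^ n := fun n => by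
    have := Nat.lt_floor_add_one (t * 2 ^ n / S)
    calc t - S / 2 ^ n = S * (t * 2 ^ n / S - 1) / 2 ^ n := by field_simp
      _ ≤ _ := by gcongr; linarith
  have hup : ∀ n : ℕ, S * ⌊t * 2 ^ n / S⌋₊ / 2 ^ n ≤ t := fun n => by
    calc _ ≤ S * (t * 2 ^ n / S) / 2 ^ n := by gcongr; exact Nat.floor_le (by positivity [ht.1])
      _ = t := by field_simp
  have hlim : Tendsto (fun n : ℕ => S * ⌊t * 2 ^ n / S⌋₊ / 2 ^ n) atTop (𝓝 t) := by
    refine tendsto_of_tendsto_of_tendsto_of_le_of_le ?_ tendsto_const_nhds hlow hup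
    simpa using (tendsto_const_nhds (x := t)).sub
      ((tendsto_const_nhds (x := S)).div_atTop (tendsto_pow_atTop_atTop_of_one_lt one_lt_two))
  obtain ⟨n, hn⟩ := (((hf.tendsto t).comp hlim).eventually (lt_mem_nhds hat)).exists
  refine ⟨n, ⌊t * 2 ^ n / S⌋₊, Nat.floor_le_of_le ?_, hn⟩
  rw [div_le_iff₀ hS]
  push_cast
  nlinarith [ht.2, pow_pos (two_pos (α := ℝ)) n]

section IndepGaussianIncrements

variable {Ω : Type*} [MeasurableSpace Ω]

structure HasIndepGaussianIncrements (μ : Measure Ω) (B : ℝ → Ω → ℝ) : Prop where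
  zero : ∀ ω, B 0 ω = 0
  measurable : ∀ t, Measurable (B t)
  map_sub : ∀ s t : ℝ, 0 ≤ s → s ≤ t →
    μ.map (fun ω => B t ω - B s ω) = gaussianReal 0 (Real.toNNReal (t - s))
  iIndepFun_sub : ∀ (n : ℕ) (τ : ℕ → ℝ), Monotone τ → (∀ i, 0 ≤ τ i) →
    iIndepFun (fun i : Fin n => fun ω => B (τ (i + 1)) ω - B (τ i) ω) μ

namespace HasIndepGaussianIncrements

variable {μ : Measure Ω} {B : ℝ → Ω → ℝ}

lemma measure_sub_mem (hB : HasIndepGaussianIncrements μ B) {s t : ℝ} (hs : 0 ≤ s)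
    (hst : s ≤ t) {A : Set ℝ} (hA : MeasurableSet A) :
    μ {ω | B t ω - B s ω ∈ A} = gaussianReal 0 (Real.toNNReal (t - s)) A := by
  rw [← hB.map_sub s t hs hst, Measure.map_apply (f := fun ω => B t ω - B s ω)
    ((hB.measurable t).sub (hB.measurable s)) hA]
  rfl

lemma measure_exists_dyadic_gt_le (hB : HasIndepGaussianIncrements μ B) {S : ℝ} (hS : 0 ≤ S)
    (a : ℝ) (n : ℕ) :
    μ {ω | ∃ k : ℕ, k ≤ 2 ^ n ∧ a < B (S * k / 2 ^ n) ω} ≤ 2 * μ {ω | a ≤ B S ω} := by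
  set τ : ℕ → ℝ := fun i => S * (min i (2 ^ n) : ℕ) / 2 ^ n with hτ
  have hτ_mono : Monotone τ := fun i j hij => by simp only [hτ]; gcongr
  have hτ_nonneg : ∀ i, 0 ≤ τ i := fun i => by positivity
  have hτ_of_le : ∀ k ≤ 2 ^ n, τ k = S * k / 2 ^ n := fun k hk => by
    simp only [hτ, min_eq_left hk]
  have hτ_top : τ (2 ^ n) = S := by rw [hτ_of_le _ le_rfl]; push_cast; field_simp
  set X : ℕ → Ω → ℝ := fun j ω => B (τ (j + 1)) ω - B (τ j) ω
  have hsum : ∀ k ω, ∑ j ∈ Finset.range k, X j ω = B (τ k) ω := fun k ω => by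
    rw [Finset.sum_range_sub (fun j => B (τ j) ω), hτ_of_le 0 (Nat.zero_le _)]
    simp [hB.zero]
  have hmedian : ∀ i ≤ 2 ^ n, 1 ≤ 2 * μ {ω | 0 ≤ ∑ j ∈ Finset.Ico i (2 ^ n), X j ω} := by
    intro i hi
    simp only [Finset.sum_Ico_eq_sub _ hi, hsum]
    have := hB.measure_sub_mem (hτ_nonneg i) (hτ_mono hi) (measurableSet_Ici (a := 0))
    exact (one_le_two_mul_gaussianReal_Ici_zero _).trans_eq (by rw [← this]; rfl)
  have hlevy := measure_exists_partialSum_gt_le (X := X)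
    (fun j => (hB.measurable _).sub (hB.measurable _))
    (hB.iIndepFun_sub _ τ hτ_mono hτ_nonneg) hmedian a
  simp only [hsum, hτ_top] at hlevy
  refine le_of_eq_of_le (congrArg μ ?_) hlevy
  ext ω
  exact exists_congr fun k => and_congr_right fun hk => by rw [hτ_of_le k hk]

lemma measure_exists_Icc_gt_le (hB : HasIndepGaussianIncrements μ B)
    (hcont : ∀ ω, Continuous fun t => B t ω) {S : ℝ} (hS : 0 ≤ S) (a : ℝ) :
    μ {ω | ∃ t ∈ Icc 0 S, a < B t ω} ≤ 2 * μ {ω | a ≤ B S ω} := by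
  set G : ℕ → Set Ω := fun n => {ω | ∃ k : ℕ, k ≤ 2 ^ n ∧ a < B (S * k / 2 ^ n) ω}
  have hG_mono : Monotone G := monotone_nat_of_le_succ fun n ω ⟨k, hk, hak⟩ =>
    ⟨2 * k, by rw [pow_succ]; omega, by convert hak using 2; push_cast; field_simp; ring⟩
  calc μ {ω | ∃ t ∈ Icc 0 S, a < B t ω} ≤ μ (⋃ n, G n) := measure_mono fun ω ⟨t, ht, hat⟩ =>
        mem_iUnion.2 (exists_dyadic_lt_of_lt (hcont ω) ht hat)
    _ = ⨆ n, μ (G n) := hG_mono.measure_iUnion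
    _ ≤ 2 * μ {ω | a ≤ B S ω} := iSup_le (hB.measure_exists_dyadic_gt_le hS a)

lemma measure_exists_Icc_gt_le_exp (hB : HasIndepGaussianIncrements μ B)
    (hcont : ∀ ω, Continuous fun t => B t ω) {S a : ℝ} (hS : 0 ≤ S) (ha : 0 ≤ a) :
    μ {ω | ∃ t ∈ Icc 0 S, a < B t ω} ≤ 2 * ENNReal.ofReal (Real.exp (-a ^ 2 / (2 * S))) := by
  refine (hB.measure_exists_Icc_gt_le hcont hS a).trans (mul_le_mul_right ?_ 2)
  have hlaw := hB.measure_sub_mem le_rfl hS (measurableSet_Ici (a := a))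
  simp only [hB.zero, sub_zero, mem_Ici] at hlaw
  rw [hlaw]
  simpa [Real.coe_toNNReal _ hS] using gaussianReal_Ici_le_exp (Real.toNNReal S) ha

end HasIndepGaussianIncrements

end IndepGaussianIncrements

lemma setOf_exists_Icc_lt_subset_biUnion_floor {Ω : Type*} {X : ℝ → Ω → ℝ} {g : ℝ → ℝ}
    (hg : MonotoneOn g (Ici 0)) (T : ℝ) :
    {ω | ∃ t ∈ Icc 0 T, g t < X t ω}
      ⊆ ⋃ k ∈ Finset.range (⌊T⌋₊ + 1), {ω | ∃ t ∈ Icc 0 ((k : ℝ) + 1), g k < X t ω} := by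
  rintro ω ⟨t, ht, hgt⟩
  refine mem_biUnion (Finset.mem_range.2 (Nat.lt_succ_of_le (Nat.floor_le_floor ht.2)))
    ⟨t, ⟨ht.1, (Nat.lt_floor_add_one t).le⟩, lt_of_le_of_lt ?_ hgt⟩
  exact hg (mem_Ici.2 (Nat.cast_nonneg _)) (mem_Ici.2 ht.1) (Nat.floor_le ht.1)

lemma two_mul_sq_mul_add_one_le_sq_max {c L x : ℝ} (hx : 0 ≤ x) (hL : 1 ≤ L)
    (hcL : 4 ≤ c ^ 2 * L) : 2 * L ^ 2 * (x + 1) ≤ (c * max (L ^ 5) (x ^ (3 / 4 : ℝ))) ^ 2 := by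
  obtain ⟨s, hs, rfl⟩ : ∃ s, 0 ≤ s ∧ x = s ^ 2 :=
    ⟨√x, Real.sqrt_nonneg x, (Real.sq_sqrt hx).symm⟩
  have hs34 : ((s ^ 2) ^ (3 / 4 : ℝ)) ^ 2 = s ^ 3 := by
    rw [← Real.rpow_natCast s 2, ← Real.rpow_mul hs, ← Real.rpow_natCast _ 2,
      ← Real.rpow_mul hs, ← Real.rpow_natCast s 3]
    norm_num
  have hL2 : 0 ≤ L ^ 2 := by positivity
  rw [mul_pow]
  rcases le_total s (L ^ 3) with hsL | hLs
  · have hs2 : L ^ 2 * s ^ 2 ≤ L ^ 2 * (L ^ 3) ^ 2 :=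
      mul_le_mul_of_nonneg_left (pow_le_pow_left₀ hs hsL 2) hL2
    have hL8 : L ^ 2 ≤ L ^ 8 := pow_le_pow_right₀ hL (by norm_num)
    have hcL2 : 4 ≤ c ^ 2 * L ^ 2 := by nlinarith
    calc 2 * L ^ 2 * (s ^ 2 + 1) ≤ 4 * L ^ 8 := by nlinarith
      _ ≤ c ^ 2 * L ^ 2 * L ^ 8 := by gcongr
      _ = c ^ 2 * (L ^ 5) ^ 2 := by ring
      _ ≤ _ := by gcongr; exact le_max_left _ _
  · have hmax : s ^ 3 ≤ max (L ^ 5) ((s ^ 2) ^ (3 / 4 : ℝ)) ^ 2 :=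
      hs34 ▸ pow_le_pow_left₀ (by positivity) (le_max_right _ _) 2
    have hs1 : 1 ≤ s := (one_le_pow₀ hL).trans hLs
    have hcs : 4 * L ^ 2 ≤ c ^ 2 * s := by
      nlinarith [mul_le_mul_of_nonneg_left hLs (sq_nonneg c)]
    calc 2 * L ^ 2 * (s ^ 2 + 1) ≤ 4 * L ^ 2 * s ^ 2 := by
          nlinarith [mul_le_mul_of_nonneg_left (one_le_pow₀ hs1 : 1 ≤ s ^ 2) hL2]
      _ ≤ c ^ 2 * s * s ^ 2 := by gcongr
      _ = c ^ 2 * s ^ 3 := by ring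
      _ ≤ _ := by gcongr

lemma floor_add_one_mul_exp_le {T : ℝ} (hT : 0 < T) (hL : 4 / 3 ≤ Real.log T) :
    (⌊T⌋₊ + 1) * (2 * Real.exp (-Real.log T ^ 2)) ≤ 4 * Real.exp (-Real.log T ^ 2 / 4) := by
  have hT1 : 1 ≤ T := by
    rw [← Real.exp_log hT]; exact Real.one_le_exp (by linarith)
  have hfloor : (⌊T⌋₊ : ℝ) + 1 ≤ 2 * T := by linarith [Nat.floor_le hT.le]
  calc (⌊T⌋₊ + 1) * (2 * Real.exp (-Real.log T ^ 2))
      ≤ 2 * T * (2 * Real.exp (-Real.log T ^ 2)) := by gcongr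
    _ = 4 * Real.exp (Real.log T - Real.log T ^ 2) := by
        rw [Real.exp_sub, Real.exp_log hT, Real.exp_neg]
        field_simp
        norm_num
    _ ≤ 4 * Real.exp (-Real.log T ^ 2 / 4) := by gcongr; nlinarith

theorem stmt10_general {Ω : Type*} [MeasurableSpace Ω] (μ : Measure Ω)
    (B : ℝ → Ω → ℝ)
    (hB0 : ∀ ω, B 0 ω = 0)
    (hBmeas : ∀ t, Measurable (B t))
    (hBcont : ∀ ω, Continuous (fun t => B t ω))
    (hBgauss : ∀ s t : ℝ, 0 ≤ s → s ≤ t →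
      Measure.map (fun ω => B t ω - B s ω) μ = gaussianReal 0 (Real.toNNReal (t - s)))
    (hBindep : ∀ (n : ℕ) (τ : ℕ → ℝ), Monotone τ → (∀ i, 0 ≤ τ i) →
      iIndepFun
        (fun i : Fin n => fun ω => B (τ (i + 1)) ω - B (τ i) ω) μ)
    (c : ℝ) (hc : 0 < c) :
    ∃ C > (0:ℝ), ∀ᶠ T : ℝ in atTop,
      μ {ω | ∃ t ∈ Icc (0:ℝ) T,
            c * max ((Real.log T) ^ 5) (t ^ ((3:ℝ)/4)) < B t ω}
        ≤ ENNReal.ofReal (C * Real.exp (-(Real.log T) ^ 2 / 4)) := by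
  have hB : HasIndepGaussianIncrements μ B := ⟨hB0, hBmeas, hBgauss, hBindep⟩
  refine ⟨4, by norm_num, ?_⟩
  filter_upwards [eventually_gt_atTop 0, Real.tendsto_log_atTop.eventually_ge_atTop (4 / 3),
    Real.tendsto_log_atTop.eventually_ge_atTop (4 / c ^ 2)] with T hT hL hcL
  set L := Real.log T
  have hcL' : 4 ≤ c ^ 2 * L := by rw [div_le_iff₀ (by positivity)] at hcL; linarith
  have hg : MonotoneOn (fun t : ℝ => c * max (L ^ 5) (t ^ ((3:ℝ)/4))) (Ici 0) :=
    fun x hx y _ hxy => by dsimp only; gcongr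
  have hblock : ∀ k : ℕ,
      μ {ω | ∃ t ∈ Icc 0 ((k : ℝ) + 1), c * max (L ^ 5) ((k : ℝ) ^ ((3:ℝ)/4)) < B t ω}
        ≤ ENNReal.ofReal (2 * Real.exp (-L ^ 2)) := fun k => by
    refine (hB.measure_exists_Icc_gt_le_exp hBcont (by positivity) (by positivity)).trans ?_
    rw [ENNReal.ofReal_mul zero_le_two, ENNReal.ofReal_ofNat]
    gcongr
    rw [neg_div, neg_le_neg_iff, le_div_iff₀ (by positivity)]
    linarith [two_mul_sq_mul_add_one_le_sq_max (Nat.cast_nonneg k) (by linarith) hcL' (c := c)]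
  calc _ ≤ ∑ k ∈ Finset.range (⌊T⌋₊ + 1),
        μ {ω | ∃ t ∈ Icc 0 ((k : ℝ) + 1), c * max (L ^ 5) ((k : ℝ) ^ ((3:ℝ)/4)) < B t ω} :=
        (measure_mono (setOf_exists_Icc_lt_subset_biUnion_floor hg T)).trans
          (measure_biUnion_finset_le _ _)
    _ ≤ ∑ _k ∈ Finset.range (⌊T⌋₊ + 1), ENNReal.ofReal (2 * Real.exp (-L ^ 2)) :=
        Finset.sum_le_sum fun k _ => hblock k
    _ = ENNReal.ofReal ((⌊T⌋₊ + 1) * (2 * Real.exp (-L ^ 2))) := by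
        rw [Finset.sum_const, Finset.card_range, nsmul_eq_mul, ← ENNReal.ofReal_natCast,
          ← ENNReal.ofReal_mul (by positivity), Nat.cast_add_one]
    _ ≤ _ := ENNReal.ofReal_le_ofReal (floor_add_one_mul_exp_le hT hL)

/-- For a standard Brownian motion `B`, `c > 0`, and `h_T(t) = max{(ln T)^5, t^{3/4}}`,
the probability that `B` exceeds `c·h_T` somewhere on `[0,T]` is bounded, up to a
constant, by `e^{-(ln T)²/4}` as `T → ∞`. -/
theorem stmt10 {Ω : Type*} [MeasurableSpace Ω] (μ : Measure Ω) [IsProbabilityMeasure μ]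
    (B : ℝ → Ω → ℝ)
    (hB0 : ∀ ω, B 0 ω = 0)
    (hBmeas : ∀ t, Measurable (B t))
    (hBcont : ∀ ω, Continuous (fun t => B t ω))
    (hBgauss : ∀ s t : ℝ, 0 ≤ s → s ≤ t →
      Measure.map (fun ω => B t ω - B s ω) μ = gaussianReal 0 (Real.toNNReal (t - s)))
    (hBindep : ∀ (n : ℕ) (τ : ℕ → ℝ), Monotone τ → (∀ i, 0 ≤ τ i) →
      iIndepFun
        (fun i : Fin n => fun ω => B (τ (i + 1)) ω - B (τ i) ω) μ)
    (c : ℝ) (hc : 0 < c) :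
    ∃ C > (0:ℝ), ∀ᶠ T : ℝ in atTop,
      μ {ω | ∃ t ∈ Icc (0:ℝ) T,
            c * max ((Real.log T) ^ 5) (t ^ ((3:ℝ)/4)) < B t ω}
        ≤ ENNReal.ofReal (C * Real.exp (-(Real.log T) ^ 2 / 4)) :=
  stmt10_general μ B hB0 hBmeas hBcont hBgauss hBindep c hc
end

section
/- Define f₀(t) = max{f(ln T), f(t)} and recursively f_n(t) = max{1, (f_{n−1}(t) − f_{n−1}(ln T))^{2/3}} + f_{n−1}(ln T) for n ≥ 1, where f : [0,∞)→[0,∞) is non-decreasing. Then for all n ≥ 0 and all t ≥ 0: f_n(t) ≤ f(ln T) + n + max{1, f(t)^{(2/3)^n}}. -/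
/-- For non-decreasing `f : [0,∞) → [0,∞)`, `T > 1`, and the iterated boundaries
`f₀(t) = max{f(ln T), f(t)}`,
`f_n(t) = max{1, (f_{n−1}(t) − f_{n−1}(ln T))^{2/3}} + f_{n−1}(ln T)` for `n ≥ 1`,
we have `f_n(t) ≤ f(ln T) + n + max{1, f(t)^{(2/3)^n}}` for all `n ≥ 0`, `t ≥ 0`. -/
theorem stmt11 (f : ℝ → ℝ) (hfnonneg : ∀ t ≥ (0:ℝ), 0 ≤ f t)
    (hfmono : MonotoneOn f (Set.Ici (0:ℝ)))
    (T : ℝ) (hT : 1 < T)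
    (F : ℕ → ℝ → ℝ)
    (hF0 : ∀ t, F 0 t = max (f (Real.log T)) (f t))
    (hFrec : ∀ n : ℕ, ∀ t,
      F (n + 1) t = max 1 ((F n t - F n (Real.log T)) ^ ((2:ℝ)/3))
        + F n (Real.log T)) :
    ∀ n : ℕ, ∀ t ≥ (0:ℝ),
      F n t ≤ f (Real.log T) + n + max 1 (f t ^ (((2:ℝ)/3) ^ n)) := by
  set L := Real.log T with hL
  have hLnn : (0:ℝ) ≤ L := Real.log_nonneg hT.le
  have hfL : 0 ≤ f L := hfnonneg L hLnn
  -- value at the boundary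
  have hFL : ∀ n : ℕ, F n L = f L + n := by
    intro n
    induction n with
    | zero => simp [hF0 L]
    | succ n ih =>
      rw [hFrec n L, ih]
      have h0 : ((f L + ↑n) - (f L + ↑n) : ℝ) ^ ((2:ℝ)/3) = 0 := by
        rw [sub_self]
        exact Real.zero_rpow (by norm_num)
      rw [h0]
      push_cast
      norm_num
      ring
  intro n
  induction n with
  | zero =>
    intro t ht
    have hft := hfnonneg t ht
    rw [hF0 t]
    simp only [pow_zero, Real.rpow_one, Nat.cast_zero, add_zero]
    rcases le_total (f L) (f t) with h | h
    · rw [max_eq_right h]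
      calc f t ≤ max 1 (f t) := le_max_right _ _
        _ ≤ f L + max 1 (f t) := le_add_of_nonneg_left hfL
    · rw [max_eq_left h]
      have : (0:ℝ) ≤ max 1 (f t) := le_trans zero_le_one (le_max_left _ _)
      linarith
  | succ n ih =>
    intro t ht
    have hft := hfnonneg t ht
    rw [hFrec n t, hFL n]
    set A := f t ^ (((2:ℝ)/3) ^ n) with hA
    set B := f t ^ (((2:ℝ)/3) ^ (n+1)) with hB
    have hAnn : 0 ≤ A := Real.rpow_nonneg hft _
    -- key: (max 1 A)^(2/3) ≤ max 1 B
    have hkey : (max 1 A) ^ ((2:ℝ)/3) ≤ max 1 B := by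
      rcases le_total A 1 with h | h
      · rw [max_eq_left h, Real.one_rpow]
        exact le_max_left _ _
      · rw [max_eq_right h]
        have : A ^ ((2:ℝ)/3) = B := by
          rw [hA, hB, ← Real.rpow_mul hft, pow_succ]
        rw [this]
        exact le_max_right _ _
    have hx : (F n t - (f L + ↑n)) ^ ((2:ℝ)/3) ≤ max 1 B := by
      rcases lt_trichotomy (F n t - (f L + ↑n)) 0 with h | h | h
      · -- negative base: rpow value is nonpositive
        rw [Real.rpow_def_of_neg h]
        have hc : Real.cos ((2:ℝ)/3 * Real.pi) = -(1/2) := by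
          rw [show (2:ℝ)/3 * Real.pi = Real.pi - Real.pi/3 by ring,
            Real.cos_pi_sub, Real.cos_pi_div_three]
        rw [hc]
        have he : (0:ℝ) < Real.exp (Real.log (F n t - (f L + ↑n)) * ((2:ℝ)/3)) :=
          Real.exp_pos _
        have : Real.exp (Real.log (F n t - (f L + ↑n)) * ((2:ℝ)/3)) * (-(1/2)) ≤ 0 := by
          nlinarith
        have h1B : (1:ℝ) ≤ max 1 B := le_max_left _ _
        linarith
      · rw [h, Real.zero_rpow (by norm_num)]
        exact le_trans zero_le_one (le_max_left _ _)
      · have hxle : F n t - (f L + ↑n) ≤ max 1 A := by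
          have := ih t ht
          rw [← hA] at this
          linarith
        calc (F n t - (f L + ↑n)) ^ ((2:ℝ)/3)
            ≤ (max 1 A) ^ ((2:ℝ)/3) :=
              Real.rpow_le_rpow h.le hxle (by norm_num)
          _ ≤ max 1 B := hkey
    have hmax : max 1 ((F n t - (f L + ↑n)) ^ ((2:ℝ)/3)) ≤ max 1 B :=
      max_le (le_max_left _ _) hx
    push_cast
    linarith
end

section
/- Let G : (1,∞) → (0,1] satisfy G(T) = T^{−δ+o(1)} · G(ln T) as T → ∞, in the sense that ln[G(T)/G(ln T)]/ln T → −δ as T → ∞, with G bounded below by a positive constant on any compact set and G(1) > 0. Then ln G(T)/ln T → −δ, i.e. G(T) = T^{−δ+o(1)} as T → ∞. -/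
open Filter

/-- `2 log x ≤ x` for all `x > 0`. -/
lemma two_log_le_self {x : ℝ} (hx : 0 < x) : 2 * Real.log x ≤ x := by
  have h1 : Real.log x = 2 * Real.log (Real.sqrt x) := by
    rw [Real.log_sqrt hx.le]; ring
  have h2 : Real.log (Real.sqrt x) ≤ Real.sqrt x - 1 :=
    Real.log_le_sub_one_of_pos (Real.sqrt_pos.mpr hx)
  nlinarith [Real.sq_sqrt hx.le, Real.sqrt_nonneg x, sq_nonneg (Real.sqrt x - 2)]

/-- If `G : (1,∞) → (0,1]` satisfies `G(T) ≥ T^{−δ+o(1)}·G(ln T)` in the sense that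
`ln(G(T)/G(ln T))/ln T → −δ`, is bounded below by a positive constant on compact sets,
and `G(1) > 0`, then `ln G(T)/ln T → −δ`, i.e. `G(T) = T^{−δ+o(1)}`. -/
theorem stmt16 (G : ℝ → ℝ) (δ : ℝ)
    (hrange : ∀ T > (1:ℝ), 0 < G T ∧ G T ≤ 1)
    (hG1 : 0 < G 1)
    (hcompact : ∀ K : Set ℝ, IsCompact K → ∃ ε > (0:ℝ), ∀ T ∈ K, ε ≤ G T)
    (hrec : Tendsto (fun T : ℝ => Real.log (G T / G (Real.log T)) / Real.log T)
      atTop (nhds (-δ))) :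
    Tendsto (fun T : ℝ => Real.log (G T) / Real.log T) atTop (nhds (-δ)) := by
  set C : ℝ := |δ| + 1 with hC
  have hCpos : 0 < C := by positivity
  have h1 : ∀ᶠ T in atTop, -C < Real.log (G T / G (Real.log T)) / Real.log T :=
    hrec.eventually (eventually_gt_nhds (by
      have := le_abs_self δ; simp only [hC]; linarith))
  obtain ⟨T₁, hT₁⟩ := eventually_atTop.mp h1
  set T₀ : ℝ := max T₁ 16 with hT₀def
  have hT₀16 : (16:ℝ) ≤ T₀ := le_max_right _ _
  obtain ⟨ε, hεpos, hεG⟩ := hcompact (Set.Icc 1 T₀) isCompact_Icc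
  set A : ℝ := Real.log (min ε 1) with hAdef
  -- base case bound
  have hbase : ∀ T : ℝ, 1 < T → T ≤ T₀ → A - 2 * C * Real.log T ≤ Real.log (G T) := by
    intro T hT1 hTle
    have hεT : ε ≤ G T := hεG T ⟨hT1.le, hTle⟩
    have hmin : min ε 1 ≤ G T := le_trans (min_le_left _ _) hεT
    have hlog : A ≤ Real.log (G T) :=
      Real.log_le_log (lt_min hεpos one_pos) hmin
    have hlT : 0 ≤ Real.log T := Real.log_nonneg hT1.le
    nlinarith
  have key : ∀ n : ℕ, ∀ T : ℝ, 1 < T → T ≤ T₀ + n →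
      A - 2 * C * Real.log T ≤ Real.log (G T) := by
    intro n
    induction n with
    | zero =>
      intro T hT1 hTle
      exact hbase T hT1 (by simpa using hTle)
    | succ n ih =>
      intro T hT1 hTle
      by_cases hT : T ≤ T₀
      · exact hbase T hT1 hT
      · push_neg at hT
        have hT16 : (16:ℝ) < T := lt_of_le_of_lt hT₀16 hT
        have hlogT1 : 1 < Real.log T := by
          rw [Real.lt_log_iff_exp_lt (by linarith)]
          calc Real.exp 1 < 2.7182818286 := Real.exp_one_lt_d9
            _ ≤ 16 := by norm_num
            _ < T := hT16
        have hlogTpos : 0 < Real.log T := by linarith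
        have hlogle : Real.log T ≤ T₀ + n := by
          have h := Real.log_le_sub_one_of_pos (show (0:ℝ) < T by linarith)
          push_cast at hTle ⊢
          linarith
        have hIH := ih (Real.log T) hlogT1 hlogle
        have hrecT := hT₁ T (le_of_lt (lt_of_le_of_lt (le_max_left _ _) hT))
        have hGT := (hrange T (by linarith)).1
        have hGlT := (hrange _ hlogT1).1
        rw [lt_div_iff₀ hlogTpos, Real.log_div (ne_of_gt hGT) (ne_of_gt hGlT)] at hrecT
        have hx := two_log_le_self hlogTpos
        nlinarith [mul_le_mul_of_nonneg_left hx hCpos.le]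
  have bound : ∀ T : ℝ, 1 < T → A - 2 * C * Real.log T ≤ Real.log (G T) := by
    intro T hT1
    exact key ⌈T⌉₊ T hT1 (by
      have h1 := Nat.le_ceil T
      linarith)
  -- the correction term tends to zero
  have h_ll : Tendsto (fun T : ℝ => Real.log (Real.log T) / Real.log T) atTop (nhds 0) :=
    Real.isLittleO_log_id_atTop.tendsto_div_nhds_zero.comp Real.tendsto_log_atTop
  have h_inv : Tendsto (fun T : ℝ => (Real.log T)⁻¹) atTop (nhds 0) :=
    tendsto_inv_atTop_zero.comp Real.tendsto_log_atTop
  have hlow : Tendsto (fun T : ℝ => A * (Real.log T)⁻¹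
      - 2 * C * (Real.log (Real.log T) / Real.log T)) atTop (nhds 0) := by
    have := (h_inv.const_mul A).sub (h_ll.const_mul (2 * C))
    simpa using this
  have hzero : Tendsto (fun T : ℝ => Real.log (G (Real.log T)) / Real.log T)
      atTop (nhds 0) := by
    apply tendsto_of_tendsto_of_tendsto_of_le_of_le' hlow tendsto_const_nhds
    · filter_upwards [eventually_ge_atTop (16:ℝ)] with T hT
      have hlogT1 : 1 < Real.log T := by
        rw [Real.lt_log_iff_exp_lt (by linarith)]
        calc Real.exp 1 < 2.7182818286 := Real.exp_one_lt_d9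
          _ ≤ 16 := by norm_num
          _ ≤ T := hT
      have hlogTpos : 0 < Real.log T := by linarith
      have hb := bound (Real.log T) hlogT1
      have : (A - 2 * C * Real.log (Real.log T)) / Real.log T
          ≤ Real.log (G (Real.log T)) / Real.log T := by
        gcongr
      calc A * (Real.log T)⁻¹ - 2 * C * (Real.log (Real.log T) / Real.log T)
          = (A - 2 * C * Real.log (Real.log T)) / Real.log T := by
            field_simp
        _ ≤ Real.log (G (Real.log T)) / Real.log T := this
    · filter_upwards [eventually_ge_atTop (16:ℝ)] with T hT
      have hlogT1 : 1 < Real.log T := by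
        rw [Real.lt_log_iff_exp_lt (by linarith)]
        calc Real.exp 1 < 2.7182818286 := Real.exp_one_lt_d9
          _ ≤ 16 := by norm_num
          _ ≤ T := hT
      have hlogTpos : 0 < Real.log T := by linarith
      have hle := (hrange _ hlogT1).2
      have := Real.log_nonpos (le_of_lt (hrange _ hlogT1).1) hle
      exact div_nonpos_of_nonpos_of_nonneg this hlogTpos.le
  have heq : ∀ᶠ T in atTop, Real.log (G T / G (Real.log T)) / Real.log T
      + Real.log (G (Real.log T)) / Real.log T = Real.log (G T) / Real.log T := by
    filter_upwards [eventually_ge_atTop (16:ℝ)] with T hT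
    have hT1 : (1:ℝ) < T := by linarith
    have hlogT1 : 1 < Real.log T := by
      rw [Real.lt_log_iff_exp_lt (by linarith)]
      calc Real.exp 1 < 2.7182818286 := Real.exp_one_lt_d9
        _ ≤ 16 := by norm_num
        _ ≤ T := hT
    have hGT := (hrange T hT1).1
    have hGlT := (hrange _ hlogT1).1
    rw [Real.log_div (ne_of_gt hGT) (ne_of_gt hGlT), sub_div]
    ring
  have := hrec.add hzero
  rw [add_zero] at this
  exact this.congr' heq
end
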